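/- arXiv:2102.05372 — 7 statements merged into one kernel-verified Lean document; each statement's English description precedes it below -/
import Mathlib

section
/- For every integer ℓ ≥ 1, every x ∈ {0,1}^n, every w ∈ {0,1}^ℓ, and every complex number z, specializing the multivariate polynomial f_{x,w} at (z, 0, …, 0) gives f_{x,w}(z,0,…,0) = Σ_{i=1}^{n−ℓ+1} 1[x_{i:i+ℓ−1} = w] · z^i, where x_{i:i+ℓ−1} denotes the substring (x_i, x_{i+1}, …, x_{i+ℓ−1}). -/
-- `f_{x,w}(z_1,…,z_ℓ) = Σ_{1 ≤ j_1 < ⋯ < j_ℓ ≤ n} 1[x_{j_h} = w_h ∀h]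
--   · z_1^{j_1} · Π_{h=2}^ℓ z_h^{j_h - j_{h-1} - 1}` (indices 1-based, `0^0 = 1`).
open Classical in
noncomputable def fxw {n ℓ : ℕ} (x : Fin n → Bool) (w : Fin ℓ → Bool) (z : Fin ℓ → ℂ) : ℂ :=
  ∑ j : Fin ℓ → Fin n,
    (if StrictMono j ∧ ∀ h : Fin ℓ, x (j h) = w h then 1 else 0) *
      ∏ h : Fin ℓ, z h ^ (if h.val = 0 then (j h).val + 1
        else (j h).val - (j ⟨h.val - 1, lt_of_le_of_lt (Nat.sub_le _ _) h.isLt⟩).val - 1)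

/-- `x_{i:i+ℓ-1} = w`, where `i : Fin n` is the (0-based) starting position. -/
def matchesAt {n ℓ : ℕ} (x : Fin n → Bool) (w : Fin ℓ → Bool) (i : Fin n) : Prop :=
  ∃ h : i.val + ℓ ≤ n,
    ∀ j : Fin ℓ, x ⟨i.val + j.val, lt_of_lt_of_le (Nat.add_lt_add_left j.isLt _) h⟩ = w j

open Classical in
theorem stmt4 (n ℓ : ℕ) (hℓ : 1 ≤ ℓ) (x : Fin n → Bool) (w : Fin ℓ → Bool) (z : ℂ) :
    fxw x w (fun h => if h.val = 0 then z else 0) =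
      ∑ i : Fin n, (if matchesAt x w i then 1 else 0) * z ^ (i.val + 1) := by
  classical
  have h0 : 0 < ℓ := hℓ
  set e0 : Fin ℓ := ⟨0, h0⟩ with he0
  -- abbreviation: consecutive property
  have step1 : fxw x w (fun h => if h.val = 0 then z else 0) =
      ∑ j : Fin ℓ → Fin n,
        (if (∀ h : Fin ℓ, (j h).val = (j e0).val + h.val) ∧ (∀ h, x (j h) = w h)
          then z ^ ((j e0).val + 1) else 0) := by
    unfold fxw
    refine Finset.sum_congr rfl fun j _ => ?_
    by_cases hQ : StrictMono j ∧ ∀ h : Fin ℓ, x (j h) = w h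
    · rw [if_pos hQ, one_mul]
      -- pull out the factor at e0
      by_cases hC : ∀ h : Fin ℓ, (j h).val = (j e0).val + h.val
      · have hcond : (∀ h : Fin ℓ, (j h).val = (j e0).val + h.val) ∧
            (∀ h, x (j h) = w h) := ⟨hC, hQ.2⟩
        rw [if_pos hcond]
        rw [← Finset.mul_prod_erase Finset.univ _ (Finset.mem_univ e0)]
        have : ∀ h ∈ Finset.univ.erase e0,
            (if (h : Fin ℓ).val = 0 then z else 0) ^
              (if h.val = 0 then (j h).val + 1
                else (j h).val - (j ⟨h.val - 1, lt_of_le_of_lt (Nat.sub_le _ _) h.isLt⟩).val - 1)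
              = 1 := by
          intro h hh
          have hne : h ≠ e0 := (Finset.mem_erase.mp hh).1
          have hv : h.val ≠ 0 := fun hv => hne (Fin.ext hv)
          have h1 : (j h).val = (j e0).val + h.val := hC h
          have h2 : (j ⟨h.val - 1, lt_of_le_of_lt (Nat.sub_le _ _) h.isLt⟩).val
              = (j e0).val + (h.val - 1) := hC _
          have : (j h).val - (j ⟨h.val - 1, lt_of_le_of_lt (Nat.sub_le _ _) h.isLt⟩).val - 1 = 0 := by
            rw [h1, h2]; omega
          rw [if_neg hv, if_neg hv, this, pow_zero]
        rw [Finset.prod_congr rfl this, Finset.prod_const_one, mul_one]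
        simp [he0]
      · have hcond : ¬((∀ h : Fin ℓ, (j h).val = (j e0).val + h.val) ∧
            (∀ h, x (j h) = w h)) := fun hc => hC hc.1
        rw [if_neg hcond]
        rw [← Finset.mul_prod_erase Finset.univ _ (Finset.mem_univ e0)]
        push_neg at hC
        obtain ⟨h, hh⟩ := hC
        -- there must be some h' with h'.val ≠ 0 and gap > 0
        have hgap : ∃ h' : Fin ℓ, h'.val ≠ 0 ∧
            0 < (j h').val - (j ⟨h'.val - 1, lt_of_le_of_lt (Nat.sub_le _ _) h'.isLt⟩).val - 1 := by
          by_contra hno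
          push_neg at hno
          apply hh
          -- prove by induction on h.val that all are consecutive
          have key : ∀ m : ℕ, ∀ hm : m < ℓ, (j ⟨m, hm⟩).val = (j e0).val + m := by
            intro m
            induction m with
            | zero => intro hm; rfl
            | succ k ih =>
              intro hm
              have hk : k < ℓ := Nat.lt_of_succ_lt hm
              have hne : (⟨k+1, hm⟩ : Fin ℓ).val ≠ 0 := by simp
              have := hno ⟨k+1, hm⟩ hne
              have hprev : (⟨(k+1) - 1, lt_of_le_of_lt (Nat.sub_le _ _) hm⟩ : Fin ℓ) = ⟨k, hk⟩ := rfl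
              rw [hprev] at this
              have hmono : (j ⟨k, hk⟩) < j ⟨k+1, hm⟩ := hQ.1 (by simp [Fin.lt_def])
              have hmono' : (j ⟨k, hk⟩).val < (j ⟨k+1, hm⟩).val := hmono
              have := ih hk
              omega
          have := key h.val h.isLt
          simpa using this
        obtain ⟨h', hv', hgap'⟩ := hgap
        have hne' : h' ∈ Finset.univ.erase e0 :=
          Finset.mem_erase.mpr ⟨fun he => hv' (by rw [he]), Finset.mem_univ _⟩
        have hfac : ((if (h' : Fin ℓ).val = 0 then z else 0) ^
            (if h'.val = 0 then (j h').val + 1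
              else (j h').val - (j ⟨h'.val - 1, lt_of_le_of_lt (Nat.sub_le _ _) h'.isLt⟩).val - 1)) = 0 := by
          rw [if_neg hv', if_neg hv']
          exact zero_pow (by omega)
        rw [Finset.prod_eq_zero hne' hfac, mul_zero]
    · rw [if_neg hQ, zero_mul, if_neg]
      rintro ⟨hc, hm⟩
      refine hQ ⟨fun a b hab => ?_, hm⟩
      have ha := hc a
      have hb := hc b
      have hab' : a.val < b.val := hab
      exact Fin.lt_def.mpr (by omega)
  rw [step1]
  -- now the bijection
  have step2 : ∀ i : Fin n, (if matchesAt x w i then (1:ℂ) else 0) * z ^ (i.val + 1)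
      = (if matchesAt x w i then z ^ (i.val + 1) else 0) := by
    intro i; split <;> simp
  simp_rw [step2]
  rw [← Finset.sum_filter, ← Finset.sum_filter]
  refine Finset.sum_bij' (fun j _ => j e0)
    (fun i hi => fun k => ⟨i.val + k.val, by
      have := (Finset.mem_filter.mp hi).2
      obtain ⟨hb, _⟩ := this
      exact lt_of_lt_of_le (Nat.add_lt_add_left k.isLt _) hb⟩)
    ?_ ?_ ?_ ?_ ?_
  · intro j hj
    rw [Finset.mem_filter] at hj ⊢
    obtain ⟨_, hc, hm⟩ := hj
    refine ⟨Finset.mem_univ _, ?_⟩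
    have hbound : (j e0).val + ℓ ≤ n := by
      have := hc ⟨ℓ - 1, by omega⟩
      have h2 := (j ⟨ℓ - 1, by omega⟩).isLt
      simp only at this
      omega
    refine ⟨hbound, fun k => ?_⟩
    have : (⟨(j e0).val + k.val, lt_of_lt_of_le (Nat.add_lt_add_left k.isLt _) hbound⟩ : Fin n) = j k := Fin.ext (hc k).symm
    rw [this]
    exact hm k
  · intro i hi
    rw [Finset.mem_filter] at hi ⊢
    obtain ⟨_, hb, hm⟩ := hi
    refine ⟨Finset.mem_univ _, fun k => by simp [he0], fun k => ?_⟩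
    exact hm k
  · intro j hj
    rw [Finset.mem_filter] at hj
    obtain ⟨_, hc, _⟩ := hj
    funext k
    exact Fin.ext (hc k).symm
  · intro i hi
    exact Fin.ext (by simp [he0])
  · intro j hj
    rfl
end

section
/- Let k be a positive integer and let x, y ∈ {0,1}^n be binary strings with x, y ∈ R_{n,3k} and y ∈ B_{3k}(x). If Σ_{i=1}^n (Σ_{j=1}^i j^m) x_i = Σ_{i=1}^n (Σ_{j=1}^i j^m) y_i for every m ∈ {0, 1, …, 6k}, then x = y. -/
/-- `x ∈ R_{n,k}` : any two 1-entries of `x` at (0-based) positions `i < j`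
satisfy `j - i ≥ k`. -/
def inR {n : ℕ} (x : Fin n → Bool) (k : ℕ) : Prop :=
  ∀ i j : Fin n, x i = true → x j = true → i < j → k ≤ j.val - i.val

/-- `x ∈ B_k(y)` : there is a common subsequence `z` of `x` and `y` with
`|y| - |z| ≤ k` and `|x| - |z| ≤ k`. -/
def inEditBall (k : ℕ) {m n : ℕ} (y : Fin m → Bool) (x : Fin n → Bool) : Prop :=
  ∃ z : List Bool, z.Sublist (List.ofFn x) ∧ z.Sublist (List.ofFn y) ∧
    m - z.length ≤ k ∧ n - z.length ≤ k

section SignLemmas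

private lemma sign_extract_neg {p q a b : ℤ} (hpq : 0 < p * q) (h : (p * a) * (q * b) < 0) :
    a * b < 0 := by
  by_contra h'
  push_neg at h'
  have h2 : 0 ≤ (p * q) * (a * b) := mul_nonneg hpq.le h'
  rw [show (p * q) * (a * b) = (p * a) * (q * b) from by ring] at h2
  linarith

private lemma sign_extract_pos {p q a b : ℤ} (hpq : p * q < 0) (h : (p * a) * (q * b) < 0) :
    0 < a * b := by
  rcases lt_trichotomy (a * b) 0 with h' | h' | h'
  · have h2 : 0 ≤ (p * q) * (a * b) := by nlinarith
    rw [show (p * q) * (a * b) = (p * a) * (q * b) from by ring] at h2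
    linarith
  · exfalso
    have heq : (p * a) * (q * b) = (p * q) * (a * b) := by ring
    rw [heq, h', mul_zero] at h
    exact lt_irrefl 0 h
  · exact h'

private lemma sign_trans {a b c : ℤ} (h1 : 0 < a * b) (h2 : a * c < 0) : b * c < 0 := by
  by_contra h'
  push_neg at h'
  have h3 : 0 ≤ (a * b) * (b * c) := mul_nonneg h1.le h'
  rw [show (a * b) * (b * c) = (a * c) * (b * b) from by ring] at h3
  have hb : b * b ≤ 0 := by nlinarith
  have hb0 : b = 0 := by nlinarith [mul_self_nonneg b]
  rw [hb0, mul_zero] at h1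
  exact lt_irrefl 0 h1

private lemma sign_pos_trans {a b c : ℤ} (h1 : 0 < a * b) (h2 : 0 < a * c) : 0 < b * c := by
  rcases lt_trichotomy (b * c) 0 with h' | h' | h'
  · exfalso
    have h3 : (a * b) * (a * c) > 0 := mul_pos h1 h2
    rw [show (a * b) * (a * c) = (b * c) * (a * a) from by ring] at h3
    nlinarith [mul_self_nonneg a]
  · exfalso
    rcases mul_eq_zero.mp h' with h | h
    · rw [h, mul_zero] at h1; exact lt_irrefl 0 h1
    · rw [h, mul_zero] at h2; exact lt_irrefl 0 h2
  · exact h'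

/-- extraction of a tight flip -/
private lemma tight_flip (N : ℕ) (e : ℕ → ℤ) :
    ∀ d j j', j' - j ≤ d → j < j' → j ∈ Finset.Icc 1 N → j' ∈ Finset.Icc 1 N →
      e j * e j' < 0 →
      ∃ a b, a < b ∧ a ∈ Finset.Icc 1 N ∧ b ∈ Finset.Icc 1 N ∧ e a * e b < 0 ∧
        ∀ t, a < t → t < b → e t = 0 := by
  intro d
  induction d with
  | zero => intro j j' h1 h2 _ _ _; omega
  | succ d ih =>
    intro j j' hd hlt hj hj' hflip
    by_cases hz : ∀ t, j < t → t < j' → e t = 0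
    · exact ⟨j, j', hlt, hj, hj', hflip, hz⟩
    · push_neg at hz
      obtain ⟨t, h1, h2, h3⟩ := hz
      have htI : t ∈ Finset.Icc 1 N := by
        simp only [Finset.mem_Icc] at hj hj' ⊢; omega
      have hej : e j ≠ 0 := by rintro h; rw [h, zero_mul] at hflip; exact lt_irrefl 0 hflip
      rcases lt_trichotomy (e j * e t) 0 with h4 | h4 | h4
      · exact ih j t (by omega) h1 hj htI h4
      · exact absurd h4 (by simp [mul_eq_zero, hej, h3])
      · exact ih t j' (by omega) h2 htI hj' (sign_trans h4 hflip)

private lemma no_flip (N : ℕ) (e : ℕ → ℤ)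
    (h : ∀ j j', j ∈ Finset.Icc 1 N → j' ∈ Finset.Icc 1 N → j < j' → 0 ≤ e j * e j')
    (h0 : ∑ j ∈ Finset.Icc 1 N, e j = 0) : ∀ j ∈ Finset.Icc 1 N, e j = 0 := by
  by_contra hc
  push_neg at hc
  obtain ⟨j0, hj0, hne⟩ := hc
  have hpair : ∀ j ∈ Finset.Icc 1 N, 0 ≤ e j * e j0 := by
    intro j hj
    rcases lt_trichotomy j j0 with h' | h' | h'
    · exact h j j0 hj hj0 h'
    · subst h'; exact mul_self_nonneg _
    · rw [mul_comm]; exact h j0 j hj0 hj h'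
  rcases hne.lt_or_gt with hneg | hpos
  · have hle : ∀ j ∈ Finset.Icc 1 N, e j ≤ 0 := by
      intro j hj
      by_contra h'
      push_neg at h'
      have := hpair j hj
      nlinarith
    have : ∀ j ∈ Finset.Icc 1 N, e j = 0 := by
      intro j hj
      have h1 : ∑ j ∈ Finset.Icc 1 N, (-(e j)) = 0 := by
        rw [Finset.sum_neg_distrib, h0, neg_zero]
      have h2 := (Finset.sum_eq_zero_iff_of_nonneg (fun j hj => by
        simpa using hle j hj)).mp h1 j hj
      simpa using h2
    exact hne (this j0 hj0)
  · have hge : ∀ j ∈ Finset.Icc 1 N, 0 ≤ e j := by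
      intro j hj
      by_contra h'
      push_neg at h'
      have := hpair j hj
      nlinarith
    exact hne ((Finset.sum_eq_zero_iff_of_nonneg hge).mp h0 j0 hj0)

private lemma key_lemma (N : ℕ) : ∀ (D : ℕ) (e : ℕ → ℤ) (E : Finset ℕ), E.card ≤ D →
    (∀ j j', j ∈ Finset.Icc 1 N → j' ∈ Finset.Icc 1 N → j < j' → e j * e j' < 0 →
      ∃ s ∈ E, j ≤ s ∧ s < j') →
    (∀ m : ℕ, m ≤ D → ∑ j ∈ Finset.Icc 1 N, (j : ℤ) ^ m * e j = 0) →
    ∀ j ∈ Finset.Icc 1 N, e j = 0 := by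
  intro D
  induction D with
  | zero =>
    intro e E hcard hsep hmom
    apply no_flip N e ?_ (by simpa using hmom 0 le_rfl)
    intro j j' hj hj' hlt
    by_contra h'
    push_neg at h'
    obtain ⟨s, hs, _⟩ := hsep j j' hj hj' hlt h'
    rw [Finset.card_eq_zero.mp (Nat.le_zero.mp hcard)] at hs
    exact absurd hs (Finset.notMem_empty s)
  | succ D ih =>
    intro e E hcard hsep hmom
    by_cases hfl : ∃ j j', j ∈ Finset.Icc 1 N ∧ j' ∈ Finset.Icc 1 N ∧ j < j' ∧ e j * e j' < 0
    · obtain ⟨j0, j0', hj0, hj0', hlt0, hflip0⟩ := hfl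
      obtain ⟨a, b, hab, haI, hbI, hfab, htight⟩ :=
        tight_flip N e (j0' - j0) j0 j0' le_rfl hlt0 hj0 hj0' hflip0
      obtain ⟨s, hsE, has, hsb⟩ := hsep a b haI hbI hab hfab
      have hea : e a ≠ 0 := fun h => by rw [h, zero_mul] at hfab; exact lt_irrefl 0 hfab
      have heb : e b ≠ 0 := fun h => by rw [h, mul_zero] at hfab; exact lt_irrefl 0 hfab
      set e' : ℕ → ℤ := fun j => (2 * (j : ℤ) - 2 * (s : ℤ) - 1) * e j with he'
      have hmom' : ∀ m : ℕ, m ≤ D → ∑ j ∈ Finset.Icc 1 N, (j : ℤ) ^ m * e' j = 0 := by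
        intro m hm
        have h1 := hmom (m + 1) (by omega)
        have h2 := hmom m (by omega)
        have : ∑ j ∈ Finset.Icc 1 N, (j : ℤ) ^ m * e' j =
            ∑ j ∈ Finset.Icc 1 N,
              (2 * ((j : ℤ) ^ (m + 1) * e j) - (2 * (s : ℤ) + 1) * ((j : ℤ) ^ m * e j)) := by
          apply Finset.sum_congr rfl
          intro j _
          rw [he']
          ring
        rw [this, Finset.sum_sub_distrib, ← Finset.mul_sum, ← Finset.mul_sum, h1, h2]
        ring
      have hsep' : ∀ j j', j ∈ Finset.Icc 1 N → j' ∈ Finset.Icc 1 N → j < j' →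
          e' j * e' j' < 0 → ∃ s0 ∈ E.erase s, j ≤ s0 ∧ s0 < j' := by
        intro u u' hu hu' hlt hflip'
        have heu : e u ≠ 0 := by
          rintro h; rw [he'] at hflip'; simp only [h, mul_zero, zero_mul] at hflip'
          exact lt_irrefl 0 hflip'
        have heu' : e u' ≠ 0 := by
          rintro h; rw [he'] at hflip'; simp only [h, mul_zero, zero_mul] at hflip'
          exact lt_irrefl 0 hflip'
        rcases le_or_gt u' s with hc1 | hc1
        · have hprod : (0:ℤ) < (2 * (u : ℤ) - 2 * s - 1) * (2 * (u' : ℤ) - 2 * s - 1) := by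
            have l1 : (2 * (u : ℤ) - 2 * s - 1) < 0 := by omega
            have l2 : (2 * (u' : ℤ) - 2 * s - 1) < 0 := by omega
            exact mul_pos_of_neg_of_neg l1 l2
          have := sign_extract_neg hprod hflip'
          obtain ⟨s0, hs0, h1, h2⟩ := hsep u u' hu hu' hlt this
          exact ⟨s0, Finset.mem_erase.mpr ⟨by omega, hs0⟩, h1, h2⟩
        rcases le_or_gt u s with hc2 | hc2
        · have hprod : (2 * (u : ℤ) - 2 * s - 1) * (2 * (u' : ℤ) - 2 * s - 1) < 0 := by
            have l1 : (2 * (u : ℤ) - 2 * s - 1) < 0 := by omega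
            have l2 : (0:ℤ) < (2 * (u' : ℤ) - 2 * s - 1) := by omega
            exact mul_neg_of_neg_of_pos l1 l2
          have hsame : 0 < e u * e u' := sign_extract_pos hprod hflip'
          have hua : u ≤ a := by
            by_contra h'
            push_neg at h'
            have : u < b := by omega
            exact heu (htight u h' this)
          have hbu' : b ≤ u' := by
            by_contra h'
            push_neg at h'
            have : a < u' := by omega
            exact heu' (htight u' this h')
          rcases lt_trichotomy (e u * e a) 0 with h4 | h4 | h4
          · have huathen : u < a := by
              rcases eq_or_lt_of_le hua with h | h
              · exfalso; rw [h] at h4; nlinarith [mul_self_nonneg (e a)]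
              · exact h
            obtain ⟨s0, hs0, h1, h2⟩ := hsep u a hu haI huathen h4
            exact ⟨s0, Finset.mem_erase.mpr ⟨by omega, hs0⟩, h1, by omega⟩
          · exact absurd h4 (mul_ne_zero heu hea)
          · have h5 : 0 < e a * e u' := sign_pos_trans h4 hsame
            have h6 : e u' * e b < 0 := sign_trans h5 hfab
            have hbu'2 : b < u' := by
              rcases eq_or_lt_of_le hbu' with h | h
              · exfalso; rw [h] at h6; nlinarith [mul_self_nonneg (e u')]
              · exact h
            obtain ⟨s0, hs0, h1, h2⟩ := hsep b u' hbI hu' hbu'2 (by rwa [mul_comm] at h6)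
            exact ⟨s0, Finset.mem_erase.mpr ⟨by omega, hs0⟩, by omega, h2⟩
        · have hprod : (0:ℤ) < (2 * (u : ℤ) - 2 * s - 1) * (2 * (u' : ℤ) - 2 * s - 1) := by
            have l1 : (0:ℤ) < (2 * (u : ℤ) - 2 * s - 1) := by omega
            have l2 : (0:ℤ) < (2 * (u' : ℤ) - 2 * s - 1) := by omega
            exact mul_pos l1 l2
          have := sign_extract_neg hprod hflip'
          obtain ⟨s0, hs0, h1, h2⟩ := hsep u u' hu hu' hlt this
          exact ⟨s0, Finset.mem_erase.mpr ⟨by omega, hs0⟩, h1, h2⟩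
      have hcard' : (E.erase s).card ≤ D := by
        rw [Finset.card_erase_of_mem hsE]
        omega
      have hzero' := ih e' (E.erase s) hcard' hsep' hmom'
      intro j hj
      have h2 := hzero' j hj
      rw [he'] at h2
      rcases mul_eq_zero.mp h2 with h | h
      · exfalso; omega
      · exact h
    · push_neg at hfl
      apply no_flip N e ?_ (by simpa using hmom 0 (by omega))
      intro j j' hj hj' hlt
      have := hfl j j' hj hj' hlt
      omega

end SignLemmas

section Comb

variable {n L : ℕ}

private def Xcnt (x : Fin n → Bool) (τ : ℕ) : ℕ :=
  (Finset.univ.filter fun i : Fin n => τ ≤ i.val ∧ x i = true).card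

private def Acnt (x : Fin n → Bool) (φ : Fin L → Fin n) (τ : ℕ) : ℕ :=
  (Finset.univ.filter fun i : Fin n => τ ≤ i.val ∧ x i = true ∧ ∀ l, φ l ≠ i).card

private def Ocnt (x : Fin n → Bool) (φ : Fin L → Fin n) (t : ℕ) : ℕ :=
  (Finset.univ.filter fun l : Fin L => t ≤ l.val ∧ x (φ l) = true).card

private def lam (φ : Fin L → Fin n) (τ : ℕ) : ℕ :=
  (Finset.univ.filter fun l : Fin L => (φ l).val < τ).card

private lemma lam_lt_iff {φ : Fin L → Fin n} (hφ : StrictMono φ) (τ : ℕ) (l : Fin L) :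
    (φ l).val < τ ↔ l.val < lam φ τ := by
  constructor
  · intro h
    have hsub : Finset.Iic l ⊆ Finset.univ.filter fun l' : Fin L => (φ l').val < τ := by
      intro l' hl'
      simp only [Finset.mem_Iic] at hl'
      simp only [Finset.mem_filter, Finset.mem_univ, true_and]
      calc (φ l').val ≤ (φ l).val := by
            rcases eq_or_lt_of_le hl' with h' | h'
            · rw [h']
            · exact le_of_lt (hφ h')
        _ < τ := h
    have := Finset.card_le_card hsub
    rw [Fin.card_Iic] at this
    unfold lam
    omega
  · intro h
    by_contra h'
    push_neg at h'
    have hsub : (Finset.univ.filter fun l' : Fin L => (φ l').val < τ) ⊆ Finset.Iio l := by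
      intro l' hl'
      simp only [Finset.mem_filter, Finset.mem_univ, true_and] at hl'
      simp only [Finset.mem_Iio]
      by_contra h''
      push_neg at h''
      have : (φ l).val ≤ (φ l').val := by
        rcases eq_or_lt_of_le h'' with h3 | h3
        · rw [h3]
        · exact le_of_lt (hφ h3)
      omega
    have := Finset.card_le_card hsub
    rw [Fin.card_Iio] at this
    unfold lam at h
    omega

private lemma mono_le_apply {φ : Fin L → Fin n} (hφ : StrictMono φ) (l : Fin L) :
    l.val ≤ (φ l).val := by
  have hmaps : ∀ l' ∈ Finset.Iio l, φ l' ∈ Finset.Iio (φ l) := by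
    intro l' hl'
    simp only [Finset.mem_Iio] at hl' ⊢
    exact hφ hl'
  have := Finset.card_le_card_of_injOn φ hmaps (fun a _ b _ h => hφ.injective h)
  rwa [Fin.card_Iio, Fin.card_Iio] at this

private lemma mono_apply_le {φ : Fin L → Fin n} (hφ : StrictMono φ) (l : Fin L) :
    (φ l).val ≤ l.val + (n - L) := by
  have hmaps : ∀ l' ∈ Finset.Ici l, φ l' ∈ Finset.Ici (φ l) := by
    intro l' hl'
    simp only [Finset.mem_Ici] at hl' ⊢
    rcases eq_or_lt_of_le hl' with h' | h'
    · rw [h']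
    · exact le_of_lt (hφ h')
  have := Finset.card_le_card_of_injOn φ hmaps (fun a _ b _ h => hφ.injective h)
  rw [Fin.card_Ici, Fin.card_Ici] at this
  have h1 : l.val < L := l.isLt
  have h2 : (φ l).val < n := (φ l).isLt
  omega

private lemma Ocnt_antitone (x : Fin n → Bool) (φ : Fin L → Fin n) {t t' : ℕ} (h : t ≤ t') :
    Ocnt x φ t' ≤ Ocnt x φ t := by
  apply Finset.card_le_card
  intro l hl
  simp only [Ocnt, Finset.mem_filter, Finset.mem_univ, true_and] at hl ⊢
  exact ⟨le_trans h hl.1, hl.2⟩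

private lemma Ocnt_congr {x y : Fin n → Bool} {φ ψ : Fin L → Fin n}
    (hxy : ∀ l, x (φ l) = y (ψ l)) (t : ℕ) : Ocnt x φ t = Ocnt y ψ t := by
  unfold Ocnt
  congr 1
  apply Finset.filter_congr
  intro l _
  rw [hxy l]

private lemma Xcnt_decomp (x : Fin n → Bool) {φ : Fin L → Fin n} (hφ : StrictMono φ) (τ : ℕ) :
    Xcnt x τ = Acnt x φ τ + Ocnt x φ (lam φ τ) := by
  unfold Xcnt Acnt Ocnt
  have hsplit : (Finset.univ.filter fun i : Fin n => τ ≤ i.val ∧ x i = true) =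
      (Finset.univ.filter fun i : Fin n => τ ≤ i.val ∧ x i = true ∧ ∀ l, φ l ≠ i) ∪
      (Finset.univ.filter fun i : Fin n => (τ ≤ i.val ∧ x i = true) ∧ ∃ l, φ l = i) := by
    ext i
    simp only [Finset.mem_union, Finset.mem_filter, Finset.mem_univ, true_and]
    by_cases h : ∃ l, φ l = i
    · tauto
    · push_neg at h
      tauto
  rw [hsplit, Finset.card_union_of_disjoint]
  · congr 1
    symm
    apply Finset.card_bij (fun l _ => φ l)
    · intro l hl
      simp only [Finset.mem_filter, Finset.mem_univ, true_and] at hl ⊢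
      refine ⟨⟨?_, hl.2⟩, l, rfl⟩
      have := (lam_lt_iff hφ τ l).not
      omega
    · intro a _ b _ h
      exact hφ.injective h
    · intro i hi
      simp only [Finset.mem_filter, Finset.mem_univ, true_and] at hi
      obtain ⟨⟨h1, h2⟩, l, rfl⟩ := hi
      refine ⟨l, ?_, rfl⟩
      simp only [Finset.mem_filter, Finset.mem_univ, true_and]
      refine ⟨?_, h2⟩
      have := (lam_lt_iff hφ τ l).not
      omega
  · rw [Finset.disjoint_left]
    intro i h1 h2
    simp only [Finset.mem_filter, Finset.mem_univ, true_and] at h1 h2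
    obtain ⟨l, hl⟩ := h2.2
    exact h1.2.2 l hl

private lemma Acnt_const (x : Fin n → Bool) (φ : Fin L → Fin n) {τ τ' : ℕ} (hle : τ ≤ τ')
    (hnoev : ∀ p : Fin n, τ ≤ p.val → p.val < τ' → ∃ l, φ l = p) :
    Acnt x φ τ = Acnt x φ τ' := by
  unfold Acnt
  congr 1
  ext i
  simp only [Finset.mem_filter, Finset.mem_univ, true_and]
  constructor
  · rintro ⟨h1, h2, h3⟩
    refine ⟨?_, h2, h3⟩
    by_contra h'
    push_neg at h'
    obtain ⟨l, hl⟩ := hnoev i h1 h'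
    exact h3 l hl
  · rintro ⟨h1, h2, h3⟩
    exact ⟨le_trans hle h1, h2, h3⟩

private lemma lam_shift {φ : Fin L → Fin n} (hφ : StrictMono φ) {τ τ' : ℕ} (hle : τ ≤ τ')
    (hτ'n : τ' ≤ n)
    (hnoev : ∀ p : Fin n, τ ≤ p.val → p.val < τ' → ∃ l, φ l = p) :
    lam φ τ' = lam φ τ + (τ' - τ) := by
  unfold lam
  have hsplit : (Finset.univ.filter fun l : Fin L => (φ l).val < τ') =
      (Finset.univ.filter fun l : Fin L => (φ l).val < τ) ∪
      (Finset.univ.filter fun l : Fin L => τ ≤ (φ l).val ∧ (φ l).val < τ') := by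
    ext l
    simp only [Finset.mem_union, Finset.mem_filter, Finset.mem_univ, true_and]
    omega
  rw [hsplit, Finset.card_union_of_disjoint]
  · congr 1
    have : (Finset.univ.filter fun l : Fin L => τ ≤ (φ l).val ∧ (φ l).val < τ').card =
        (Finset.Ico τ τ').card := by
      apply Finset.card_bij (fun l _ => (φ l).val)
      · intro l hl
        simp only [Finset.mem_filter, Finset.mem_univ, true_and] at hl
        simp only [Finset.mem_Ico]
        exact hl
      · intro a _ b _ h
        exact hφ.injective (Fin.val_injective h)
      · intro p hp
        simp only [Finset.mem_Ico] at hp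
        have hpn : p < n := lt_of_lt_of_le hp.2 hτ'n
        obtain ⟨l, hl⟩ := hnoev ⟨p, hpn⟩ hp.1 hp.2
        refine ⟨l, ?_, by rw [hl]⟩
        simp only [Finset.mem_filter, Finset.mem_univ, true_and, hl]
        exact hp
    rw [this, Nat.card_Ico]
  · rw [Finset.disjoint_left]
    intro l h1 h2
    simp only [Finset.mem_filter, Finset.mem_univ, true_and] at h1 h2
    omega

private lemma window_pair {k3 : ℕ} {x : Fin n → Bool} {φ ψ : Fin L → Fin n}
    (hφ : StrictMono φ) (hψ : StrictMono ψ)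
    (hx : inR x k3) (hLn : n - L ≤ k3) (τ : ℕ) {l1 l2 : Fin L}
    (h1 : l1 ∈ Finset.univ.filter fun l : Fin L =>
      lam φ τ ≤ l.val ∧ l.val < lam ψ τ ∧ x (φ l) = true)
    (h2 : l2 ∈ Finset.univ.filter fun l : Fin L =>
      lam φ τ ≤ l.val ∧ l.val < lam ψ τ ∧ x (φ l) = true)
    (hlt : l1 < l2) : False := by
  simp only [Finset.mem_filter, Finset.mem_univ, true_and] at h1 h2
  have hτ1 : τ ≤ (φ l1).val := by
    have := (lam_lt_iff hφ τ l1).not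
    omega
  have hτ2 : (ψ l2).val < τ := by
    have := (lam_lt_iff hψ τ l2).mpr h2.2.1
    omega
  have hRLL : k3 ≤ (φ l2).val - (φ l1).val := hx (φ l1) (φ l2) h1.2.2 h2.2.2 (hφ hlt)
  have hub : (φ l2).val ≤ l2.val + (n - L) := mono_apply_le hφ l2
  have hlb : l2.val ≤ (ψ l2).val := mono_le_apply hψ l2
  have hmono : (φ l1).val < (φ l2).val := hφ hlt
  omega

private lemma window_card {k3 : ℕ} {x : Fin n → Bool} {φ ψ : Fin L → Fin n}
    (hφ : StrictMono φ) (hψ : StrictMono ψ)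
    (hx : inR x k3) (hLn : n - L ≤ k3) (τ : ℕ) :
    (Finset.univ.filter fun l : Fin L =>
      lam φ τ ≤ l.val ∧ l.val < lam ψ τ ∧ x (φ l) = true).card ≤ 1 := by
  apply Finset.card_le_one.mpr
  intro a ha b hb
  rcases lt_trichotomy a b with h | h | h
  · exact absurd (window_pair hφ hψ hx hLn τ ha hb h) (fun h => h)
  · exact h
  · exact absurd (window_pair hφ hψ hx hLn τ hb ha h) (fun h => h)

private lemma M_le_one {k3 : ℕ} {x : Fin n → Bool} {φ ψ : Fin L → Fin n}
    (hφ : StrictMono φ) (hψ : StrictMono ψ)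
    (hx : inR x k3) (hLn : n - L ≤ k3) (τ : ℕ) :
    (Ocnt x φ (lam φ τ) : ℤ) - (Ocnt x φ (lam ψ τ) : ℤ) ≤ 1 := by
  rcases le_or_gt (lam ψ τ) (lam φ τ) with hc | hc
  · have := Ocnt_antitone x φ hc
    omega
  · have hsplit : (Finset.univ.filter fun l : Fin L => lam φ τ ≤ l.val ∧ x (φ l) = true) =
        (Finset.univ.filter fun l : Fin L => lam ψ τ ≤ l.val ∧ x (φ l) = true) ∪
        (Finset.univ.filter fun l : Fin L =>
          lam φ τ ≤ l.val ∧ l.val < lam ψ τ ∧ x (φ l) = true) := by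
      ext l
      simp only [Finset.mem_union, Finset.mem_filter, Finset.mem_univ, true_and]
      constructor
      · rintro ⟨ha, hb⟩
        rcases le_or_gt (lam ψ τ) l.val with h | h
        · exact Or.inl ⟨h, hb⟩
        · exact Or.inr ⟨ha, h, hb⟩
      · rintro (⟨ha, hb⟩ | ⟨ha, _, hb⟩)
        · exact ⟨by omega, hb⟩
        · exact ⟨ha, hb⟩
    have hdisj : Disjoint
        (Finset.univ.filter fun l : Fin L => lam ψ τ ≤ l.val ∧ x (φ l) = true)
        (Finset.univ.filter fun l : Fin L =>
          lam φ τ ≤ l.val ∧ l.val < lam ψ τ ∧ x (φ l) = true) := by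
      rw [Finset.disjoint_left]
      intro l h1 h2
      simp only [Finset.mem_filter, Finset.mem_univ, true_and] at h1 h2
      omega
    have hcard : Ocnt x φ (lam φ τ) = Ocnt x φ (lam ψ τ) +
        (Finset.univ.filter fun l : Fin L =>
          lam φ τ ≤ l.val ∧ l.val < lam ψ τ ∧ x (φ l) = true).card := by
      unfold Ocnt
      rw [hsplit, Finset.card_union_of_disjoint hdisj]
    have := window_card hφ hψ hx hLn τ
    omega

private lemma main_comb {k3 : ℕ} (x y : Fin n → Bool) (φ ψ : Fin L → Fin n)
    (hφ : StrictMono φ) (hψ : StrictMono ψ) (hxy : ∀ l, x (φ l) = y (ψ l))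
    (hx : inR x k3) (hy : inR y k3) (hLn : n - L ≤ k3)
    {τ τ' : ℕ} (hle : τ ≤ τ') (hτ'n : τ' ≤ n)
    (hnoevφ : ∀ p : Fin n, τ ≤ p.val → p.val < τ' → ∃ l, φ l = p)
    (hnoevψ : ∀ p : Fin n, τ ≤ p.val → p.val < τ' → ∃ l, ψ l = p) :
    ((Xcnt x τ : ℤ) - (Xcnt y τ)) - ((Xcnt x τ' : ℤ) - (Xcnt y τ')) ≤ 1 := by
  have hd1 := Xcnt_decomp x hφ τ
  have hd2 := Xcnt_decomp x hφ τ'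
  have hd3 := Xcnt_decomp y hψ τ
  have hd4 := Xcnt_decomp y hψ τ'
  have hA1 := Acnt_const x φ hle hnoevφ
  have hA2 := Acnt_const y ψ hle hnoevψ
  have hL1 := lam_shift hφ hle hτ'n hnoevφ
  have hL2 := lam_shift hψ hle hτ'n hnoevψ
  have hOc : ∀ t, Ocnt y ψ t = Ocnt x φ t := fun t => (Ocnt_congr hxy t).symm
  rw [hOc] at hd3 hd4
  have hM1 : (Ocnt x φ (lam φ τ) : ℤ) - (Ocnt x φ (lam ψ τ) : ℤ) ≤ 1 :=
    M_le_one hφ hψ hx hLn τ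
  rcases le_or_gt (lam φ τ) (lam ψ τ) with hc | hc
  · have hc' : lam φ τ' ≤ lam ψ τ' := by omega
    have hM2 : (Ocnt x φ (lam ψ τ') : ℤ) ≤ (Ocnt x φ (lam φ τ') : ℤ) := by
      exact_mod_cast Ocnt_antitone x φ hc'
    omega
  · have hM3 : (Ocnt x φ (lam φ τ) : ℤ) ≤ (Ocnt x φ (lam ψ τ) : ℤ) := by
      exact_mod_cast Ocnt_antitone x φ hc.le
    have hM4 : (Ocnt y ψ (lam ψ τ') : ℤ) - (Ocnt y ψ (lam φ τ') : ℤ) ≤ 1 :=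
      M_le_one hψ hφ hy hLn τ'
    rw [hOc, hOc] at hM4
    omega

end Comb

section Cnt

variable {n : ℕ}

private def cnt (x : Fin n → Bool) (j : ℕ) : ℕ :=
  (Finset.univ.filter fun i : Fin n => j ≤ i.val + 1 ∧ x i = true).card

private lemma cnt_eq_Xcnt (x : Fin n → Bool) {j : ℕ} (hj : 1 ≤ j) : cnt x j = Xcnt x (j - 1) := by
  unfold cnt Xcnt
  congr 1
  apply Finset.filter_congr
  intro i _
  constructor
  · rintro ⟨h1, h2⟩; exact ⟨by omega, h2⟩
  · rintro ⟨h1, h2⟩; exact ⟨by omega, h2⟩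

private lemma sum_swap_cnt (x : Fin n → Bool) (m : ℕ) :
    (∑ i : Fin n, (∑ j ∈ Finset.Icc 1 (i.val + 1), j ^ m) * (if x i then 1 else 0)) =
      ∑ j ∈ Finset.Icc 1 n, j ^ m * cnt x j := by
  have step1 : ∀ i : Fin n,
      (∑ j ∈ Finset.Icc 1 (i.val + 1), j ^ m) * (if x i then 1 else 0) =
      ∑ j ∈ Finset.Icc 1 n, (if j ≤ i.val + 1 then j ^ m * (if x i then 1 else 0) else 0) := by
    intro i
    rw [Finset.sum_mul, ← Finset.sum_filter]
    have : Finset.filter (fun j => j ≤ i.val + 1) (Finset.Icc 1 n) = Finset.Icc 1 (i.val + 1) := by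
      ext j
      simp only [Finset.mem_filter, Finset.mem_Icc]
      have := i.isLt
      omega
    rw [this]
  rw [Finset.sum_congr rfl (fun i _ => step1 i), Finset.sum_comm]
  apply Finset.sum_congr rfl
  intro j _
  rw [cnt, Finset.card_filter, Finset.mul_sum]
  apply Finset.sum_congr rfl
  intro i _
  by_cases h1 : j ≤ i.val + 1 <;> by_cases h2 : x i <;> simp [h1, h2]

private lemma cnt_step (x : Fin n → Bool) (i : Fin n) :
    cnt x (i.val + 1) = cnt x (i.val + 2) + (if x i then 1 else 0) := by
  unfold cnt
  have hsplit : (Finset.univ.filter fun i' : Fin n => i.val + 1 ≤ i'.val + 1 ∧ x i' = true) =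
      (Finset.univ.filter fun i' : Fin n => i.val + 2 ≤ i'.val + 1 ∧ x i' = true) ∪
      (Finset.univ.filter fun i' : Fin n => i' = i ∧ x i' = true) := by
    ext i'
    simp only [Finset.mem_union, Finset.mem_filter, Finset.mem_univ, true_and]
    constructor
    · rintro ⟨h1, h2⟩
      rcases le_or_gt (i.val + 2) (i'.val + 1) with h | h
      · exact Or.inl ⟨h, h2⟩
      · have : i' = i := Fin.ext (by omega)
        exact Or.inr ⟨this, h2⟩
    · rintro (⟨h1, h2⟩ | ⟨h1, h2⟩)
      · exact ⟨by omega, h2⟩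
      · subst h1; exact ⟨le_refl _, h2⟩
  rw [hsplit, Finset.card_union_of_disjoint]
  · congr 1
    by_cases hv : x i = true
    · have : (Finset.univ.filter fun i' : Fin n => i' = i ∧ x i' = true) = {i} := by
        ext i'
        simp only [Finset.mem_filter, Finset.mem_univ, true_and, Finset.mem_singleton]
        constructor
        · rintro ⟨h, _⟩; exact h
        · rintro rfl; exact ⟨rfl, hv⟩
      rw [this]
      simp [hv]
    · have : (Finset.univ.filter fun i' : Fin n => i' = i ∧ x i' = true) = ∅ := by
        ext i'
        simp only [Finset.mem_filter, Finset.mem_univ, true_and, Finset.notMem_empty,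
          iff_false]
        rintro ⟨rfl, h⟩
        exact hv h
      rw [this]
      simp [hv]
  · rw [Finset.disjoint_left]
    intro i' h1 h2
    simp only [Finset.mem_filter, Finset.mem_univ, true_and] at h1 h2
    rcases h2 with ⟨rfl, _⟩
    omega

private lemma cnt_top (x : Fin n → Bool) : cnt x (n + 1) = 0 := by
  unfold cnt
  rw [Finset.card_eq_zero]
  ext i
  simp only [Finset.mem_filter, Finset.mem_univ, true_and, Finset.notMem_empty, iff_false]
  rintro ⟨h, _⟩
  have := i.isLt
  omega

private lemma exists_mono_of_sublist (x : Fin n → Bool) (z : List Bool)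
    (hzx : z.Sublist (List.ofFn x)) :
    ∃ φ : Fin z.length → Fin n, StrictMono φ ∧ ∀ l, x (φ l) = z.get l := by
  rw [List.sublist_iff_exists_fin_orderEmbedding_get_eq] at hzx
  obtain ⟨f, hf⟩ := hzx
  refine ⟨fun l => Fin.cast List.length_ofFn (f l), ?_, ?_⟩
  · intro a b h
    have h2 : f a < f b := f.strictMono h
    rw [Fin.lt_def] at h2 ⊢
    simpa using h2
  · intro l
    rw [hf l]
    rw [List.get_ofFn]

end Cnt

theorem stmt6 (k n : ℕ) (hk : 0 < k) (x y : Fin n → Bool)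
    (hx : inR x (3 * k)) (hy : inR y (3 * k))
    (hball : inEditBall (3 * k) x y)
    (hsums : ∀ m : ℕ, m ≤ 6 * k →
      (∑ i : Fin n, (∑ j ∈ Finset.Icc 1 (i.val + 1), j ^ m) * (if x i then 1 else 0)) =
        (∑ i : Fin n, (∑ j ∈ Finset.Icc 1 (i.val + 1), j ^ m) * (if y i then 1 else 0))) :
    x = y := by
  classical
  obtain ⟨z, hzy, hzx, hlen, -⟩ := hball
  obtain ⟨φ, hφ, hxφ⟩ := exists_mono_of_sublist x z hzx
  obtain ⟨ψ, hψ, hyψ⟩ := exists_mono_of_sublist y z hzy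
  have hxy : ∀ l, x (φ l) = y (ψ l) := fun l => by rw [hxφ l, hyψ l]
  have hLn : n - z.length ≤ 3 * k := hlen
  set Eφ : Finset ℕ :=
    (Finset.univ.filter fun i : Fin n => ∀ l : Fin z.length, φ l ≠ i).image Fin.val with hEφ
  set Eψ : Finset ℕ :=
    (Finset.univ.filter fun i : Fin n => ∀ l : Fin z.length, ψ l ≠ i).image Fin.val with hEψ
  have hcard_gen : ∀ (χ : Fin z.length → Fin n), Function.Injective χ →
      ((Finset.univ.filter fun i : Fin n => ∀ l, χ l ≠ i).image Fin.val).card ≤ n - z.length := by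
    intro χ hχ
    calc ((Finset.univ.filter fun i : Fin n => ∀ l, χ l ≠ i).image Fin.val).card
        ≤ (Finset.univ.filter fun i : Fin n => ∀ l, χ l ≠ i).card := Finset.card_image_le
      _ = n - z.length := by
          have heq : (Finset.univ.filter fun i : Fin n => ∀ l, χ l ≠ i) =
              Finset.univ \ Finset.image χ Finset.univ := by
            ext i
            simp only [Finset.mem_filter, Finset.mem_univ, true_and, Finset.mem_sdiff,
              Finset.mem_image, not_exists]
          rw [heq, Finset.card_sdiff_of_subset (Finset.subset_univ _),
            Finset.card_image_of_injective _ hχ]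
          simp
  set E : Finset ℕ := (Eφ ∪ Eψ).image (· + 1) with hE
  have hcardE : E.card ≤ 6 * k := by
    calc E.card ≤ (Eφ ∪ Eψ).card := Finset.card_image_le
      _ ≤ Eφ.card + Eψ.card := Finset.card_union_le _ _
      _ ≤ (n - z.length) + (n - z.length) := by
          have h1 := hcard_gen φ hφ.injective
          have h2 := hcard_gen ψ hψ.injective
          rw [hEφ, hEψ]
          omega
      _ ≤ 6 * k := by omega
  have hmomE : ∀ m : ℕ, m ≤ 6 * k →
      ∑ j ∈ Finset.Icc 1 n, (j : ℤ) ^ m * ((cnt x j : ℤ) - (cnt y j : ℤ)) = 0 := by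
    intro m hm
    have h1 := hsums m hm
    rw [sum_swap_cnt x m, sum_swap_cnt y m] at h1
    have h2 : ∑ j ∈ Finset.Icc 1 n, (j : ℤ) ^ m * ((cnt x j : ℤ) - (cnt y j : ℤ)) =
        ((∑ j ∈ Finset.Icc 1 n, j ^ m * cnt x j : ℕ) : ℤ) -
        ((∑ j ∈ Finset.Icc 1 n, j ^ m * cnt y j : ℕ) : ℤ) := by
      push_cast
      rw [← Finset.sum_sub_distrib]
      apply Finset.sum_congr rfl
      intro j _
      ring
    rw [h2, h1, sub_self]
  have hsepE : ∀ j j', j ∈ Finset.Icc 1 n → j' ∈ Finset.Icc 1 n → j < j' →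
      ((cnt x j : ℤ) - (cnt y j : ℤ)) * ((cnt x j' : ℤ) - (cnt y j' : ℤ)) < 0 →
      ∃ s ∈ E, j ≤ s ∧ s < j' := by
    intro j j' hj hj' hjj' hflip
    simp only [Finset.mem_Icc] at hj hj'
    by_contra hcon
    push_neg at hcon
    have hnoev : ∀ p : Fin n, j - 1 ≤ p.val → p.val < j' - 1 →
        (∃ l, φ l = p) ∧ (∃ l, ψ l = p) := by
      intro p h1 h2
      have hmemE : ∀ q ∈ Eφ ∪ Eψ, q + 1 ∈ E := by
        intro q hq
        rw [hE]
        exact Finset.mem_image.mpr ⟨q, hq, rfl⟩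
      constructor
      · by_contra h'
        push_neg at h'
        have hpE : p.val ∈ Eφ ∪ Eψ := by
          apply Finset.mem_union_left
          rw [hEφ]
          exact Finset.mem_image.mpr ⟨p, Finset.mem_filter.mpr ⟨Finset.mem_univ _, h'⟩, rfl⟩
        have := hcon (p.val + 1) (hmemE _ hpE) (by omega)
        omega
      · by_contra h'
        push_neg at h'
        have hpE : p.val ∈ Eφ ∪ Eψ := by
          apply Finset.mem_union_right
          rw [hEψ]
          exact Finset.mem_image.mpr ⟨p, Finset.mem_filter.mpr ⟨Finset.mem_univ _, h'⟩, rfl⟩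
        have := hcon (p.val + 1) (hmemE _ hpE) (by omega)
        omega
    have hτ : j - 1 ≤ j' - 1 := by omega
    have hτn : j' - 1 ≤ n := by omega
    have hc1 := main_comb x y φ ψ hφ hψ hxy hx hy hLn hτ hτn
      (fun p h1 h2 => (hnoev p h1 h2).1) (fun p h1 h2 => (hnoev p h1 h2).2)
    have hc2 := main_comb y x ψ φ hψ hφ (fun l => (hxy l).symm) hy hx hLn hτ hτn
      (fun p h1 h2 => (hnoev p h1 h2).2) (fun p h1 h2 => (hnoev p h1 h2).1)
    have hej1 : cnt x j = Xcnt x (j - 1) := cnt_eq_Xcnt x (by omega)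
    have hej2 : cnt y j = Xcnt y (j - 1) := cnt_eq_Xcnt y (by omega)
    have hej3 : cnt x j' = Xcnt x (j' - 1) := cnt_eq_Xcnt x (by omega)
    have hej4 : cnt y j' = Xcnt y (j' - 1) := cnt_eq_Xcnt y (by omega)
    rw [hej1, hej2, hej3, hej4] at hflip
    rcases mul_neg_iff.mp hflip with ⟨h1, h2⟩ | ⟨h1, h2⟩ <;> linarith
  have hzero := key_lemma n (6 * k) (fun j => (cnt x j : ℤ) - (cnt y j : ℤ)) E hcardE hsepE hmomE
  funext i
  have hin : i.val < n := i.isLt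
  have hz1 : (cnt x (i.val + 1) : ℤ) - (cnt y (i.val + 1) : ℤ) = 0 :=
    hzero (i.val + 1) (Finset.mem_Icc.mpr ⟨by omega, by omega⟩)
  have h1 : cnt x (i.val + 1) = cnt y (i.val + 1) := by omega
  have h2 : cnt x (i.val + 2) = cnt y (i.val + 2) := by
    rcases le_or_gt (i.val + 2) n with h | h
    · have hz2 : (cnt x (i.val + 2) : ℤ) - (cnt y (i.val + 2) : ℤ) = 0 :=
        hzero (i.val + 2) (Finset.mem_Icc.mpr ⟨by omega, h⟩)
      omega
    · have e1 : i.val + 2 = n + 1 := by omega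
      rw [e1, cnt_top, cnt_top]
  have hs1 := cnt_step x i
  have hs2 := cnt_step y i
  cases hxi : x i <;> cases hyi : y i <;>
    rw [hxi] at hs1 <;> rw [hyi] at hs2 <;> norm_num at hs1 hs2 <;>
    first
      | rfl
      | (exfalso; omega)
end

section
/- Let s and m be positive integers and let α_1,…,α_s and β_1,…,β_s be nonnegative integers. Then the following two statements are equivalent: (a) Σ_{i=1}^s α_i^j = Σ_{i=1}^s β_i^j for every j ∈ {1,…,m−1}; (b) the polynomial (z−1)^m divides the polynomial Σ_{i=1}^s z^{α_i} − Σ_{i=1}^s z^{β_i} in ℤ[z] (equivalently in ℂ[z]). -/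
open Polynomial

private lemma sum_eval_eq_aux {s n : ℕ} (a b : Fin s → ℤ)
    (h : ∀ k, k ≤ n → (∑ i : Fin s, a i ^ k) = ∑ i : Fin s, b i ^ k)
    {p : ℤ[X]} (hp : p.natDegree ≤ n) :
    (∑ i : Fin s, p.eval (a i)) = ∑ i : Fin s, p.eval (b i) := by
  have hlt : p.natDegree < n + 1 := Nat.lt_succ_of_le hp
  simp_rw [Polynomial.eval_eq_sum_range' hlt]
  have hsw : ∀ (c : Fin s → ℤ),
      (∑ i : Fin s, ∑ k ∈ Finset.range (n + 1), p.coeff k * c i ^ k) =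
        ∑ k ∈ Finset.range (n + 1), p.coeff k * ∑ i : Fin s, c i ^ k := by
    intro c
    rw [Finset.sum_comm]
    exact Finset.sum_congr rfl fun k _ => (Finset.mul_sum _ _ _).symm
  rw [hsw, hsw]
  exact Finset.sum_congr rfl fun k hk =>
    congrArg _ (h k (Nat.lt_succ_iff.mp (Finset.mem_range.mp hk)))

private lemma desc_of_pow {s m : ℕ} (a b : Fin s → ℕ)
    (h : ∀ j, 1 ≤ j → j ≤ m - 1 → (∑ i : Fin s, (a i : ℤ) ^ j) = ∑ i : Fin s, (b i : ℤ) ^ j)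
    {k : ℕ} (hk : k < m) :
    (∑ i : Fin s, ((a i).descFactorial k : ℤ)) = ∑ i : Fin s, ((b i).descFactorial k : ℤ) := by
  have hpow : ∀ j, j ≤ m - 1 → (∑ i : Fin s, (a i : ℤ) ^ j) = ∑ i : Fin s, (b i : ℤ) ^ j := by
    intro j hj
    rcases Nat.eq_zero_or_pos j with rfl | hj1
    · simp
    · exact h j hj1 hj
  have := sum_eval_eq_aux (fun i => (a i : ℤ)) (fun i => (b i : ℤ)) hpow
    (p := descPochhammer ℤ k) (by rw [descPochhammer_natDegree]; omega)
  simpa only [descPochhammer_eval_eq_descFactorial] using this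

private lemma pow_of_desc {s m : ℕ} (a b : Fin s → ℕ)
    (hd : ∀ k, k < m →
      (∑ i : Fin s, ((a i).descFactorial k : ℤ)) = ∑ i : Fin s, ((b i).descFactorial k : ℤ)) :
    ∀ j, 1 ≤ j → j ≤ m - 1 → (∑ i : Fin s, (a i : ℤ) ^ j) = ∑ i : Fin s, (b i : ℤ) ^ j := by
  intro j
  induction j using Nat.strong_induction_on with
  | _ j IH =>
    intro h1 h2
    have hjm : j < m := by omega
    set q : ℤ[X] := descPochhammer ℤ j - X ^ j with hq
    have hmon := monic_descPochhammer ℤ j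
    have hdegq : q.natDegree ≤ j - 1 := by
      rcases eq_or_ne q 0 with h0 | h0
      · simp [h0]
      · have hdeg1 : (descPochhammer ℤ j).degree = (j : ℕ) := by
          rw [degree_eq_natDegree hmon.ne_zero, descPochhammer_natDegree]
        have hlt : q.degree < (descPochhammer ℤ j).degree :=
          degree_sub_lt (by rw [hdeg1, degree_X_pow]) hmon.ne_zero
            (by rw [hmon.leadingCoeff, leadingCoeff_X_pow])
        rw [hdeg1] at hlt
        have := (natDegree_lt_iff_degree_lt h0).mpr hlt
        omega
    have hkey : ∀ x : ℕ, (x : ℤ) ^ j = ((x).descFactorial j : ℤ) - q.eval (x : ℤ) := by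
      intro x
      rw [hq, eval_sub, eval_pow, eval_X, descPochhammer_eval_eq_descFactorial]
      ring
    have hqsum : (∑ i : Fin s, q.eval ((a i : ℤ))) = ∑ i : Fin s, q.eval ((b i : ℤ)) := by
      refine sum_eval_eq_aux _ _ ?_ hdegq
      intro k hk
      rcases Nat.eq_zero_or_pos k with rfl | hk1
      · simp
      · exact IH k (by omega) hk1 (by omega)
    simp_rw [hkey]
    rw [Finset.sum_sub_distrib, Finset.sum_sub_distrib, hd j hjm, hqsum]

private lemma hasseDeriv_X_pow_eval_one (a k : ℕ) :
    ((Polynomial.hasseDeriv k ((X : ℤ[X]) ^ a)).eval 1) = (a.choose k : ℤ) := by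
  rw [X_pow_eq_monomial, hasseDeriv_monomial]
  simp

theorem stmt8 (s m : ℕ) (hs : 0 < s) (hm : 0 < m) (α β : Fin s → ℕ) :
    (∀ j : ℕ, 1 ≤ j → j ≤ m - 1 → (∑ i : Fin s, (α i) ^ j) = (∑ i : Fin s, (β i) ^ j)) ↔
      ((X - 1) ^ m ∣ ((∑ i : Fin s, X ^ (α i)) - (∑ i : Fin s, X ^ (β i)) : ℤ[X])) := by
  set f : ℤ[X] := (∑ i : Fin s, X ^ (α i)) - (∑ i : Fin s, X ^ (β i)) with hf
  -- the divisibility is equivalent to equality of binomial sums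
  have hc : ∀ d : ℕ, (f.comp (X + C 1)).coeff d =
      (∑ i : Fin s, ((α i).choose d : ℤ)) - ∑ i : Fin s, ((β i).choose d : ℤ) := by
    intro d
    rw [← taylor_apply, taylor_coeff, hf, map_sub, map_sum, map_sum, eval_sub,
      eval_finset_sum, eval_finset_sum]
    simp_rw [hasseDeriv_X_pow_eval_one]
  have hdvd : ((X - 1 : ℤ[X]) ^ m ∣ f) ↔ ∀ d, d < m →
      (∑ i : Fin s, ((α i).choose d : ℤ)) = ∑ i : Fin s, ((β i).choose d : ℤ) := by
    have h1 : (X - 1 : ℤ[X]) = X - C 1 := by rw [map_one]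
    rw [h1, X_sub_C_pow_dvd_iff, X_pow_dvd_iff]
    constructor
    · intro h d hd
      have := h d hd
      rw [hc d, sub_eq_zero] at this
      exact this
    · intro h d hd
      rw [hc d, sub_eq_zero]
      exact h d hd
  -- binomial sums equal iff descFactorial sums equal
  have hcd : (∀ d, d < m →
      (∑ i : Fin s, ((α i).choose d : ℤ)) = ∑ i : Fin s, ((β i).choose d : ℤ)) ↔
      (∀ d, d < m →
      (∑ i : Fin s, ((α i).descFactorial d : ℤ)) = ∑ i : Fin s, ((β i).descFactorial d : ℤ)) := by
    have hrw : ∀ (n d : ℕ), ((n.descFactorial d : ℤ)) = (d.factorial : ℤ) * (n.choose d : ℤ) := by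
      intro n d
      exact_mod_cast congrArg (Nat.cast : ℕ → ℤ) (Nat.descFactorial_eq_factorial_mul_choose n d)
    constructor
    · intro h d hd
      simp_rw [hrw, ← Finset.mul_sum, h d hd]
    · intro h d hd
      have hne : (d.factorial : ℤ) ≠ 0 := by exact_mod_cast d.factorial_ne_zero
      have := h d hd
      simp_rw [hrw, ← Finset.mul_sum] at this
      exact mul_left_cancel₀ hne this
  rw [hdvd, hcd]
  constructor
  · intro h d hd
    refine desc_of_pow α β ?_ hd
    intro j h1 h2
    exact_mod_cast h j h1 h2
  · intro h j h1 h2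
    exact_mod_cast pow_of_desc α β h j h1 h2
end

section
/- For every positive integer p and every binary string w ∈ {0,1}^{2p−1}, at least one of the two strings (w,0) and (w,1) of length 2p, obtained from w by appending a 0 or a 1 respectively, is non-periodic. -/
/-- `w` has period `a` : `w_i = w_{i+a}` for all `1 ≤ i ≤ ℓ - a` (0-based below). -/
def HasPeriod {ℓ : ℕ} (w : Fin ℓ → Bool) (a : ℕ) : Prop :=
  ∀ i : ℕ, ∀ h : i + a < ℓ,
    w ⟨i, Nat.lt_of_le_of_lt (Nat.le_add_right i a) h⟩ = w ⟨i + a, h⟩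

/-- `w` is non-periodic : it has no period `a` with `1 ≤ a ≤ ⌈ℓ/2⌉ - 1`. -/
def NonPeriodic {ℓ : ℕ} (w : Fin ℓ → Bool) : Prop :=
  ∀ a : ℕ, 1 ≤ a → a ≤ (ℓ + 1) / 2 - 1 → ¬ HasPeriod w a

theorem stmt9 (p : ℕ) (hp : 0 < p) (w : Fin (2 * p - 1) → Bool) :
    NonPeriodic (fun i : Fin (2 * p) =>
        if h : i.val < 2 * p - 1 then w ⟨i.val, h⟩ else false) ∨
      NonPeriodic (fun i : Fin (2 * p) =>
        if h : i.val < 2 * p - 1 then w ⟨i.val, h⟩ else true) := by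
  by_contra hC
  push_neg at hC
  obtain ⟨h0, h1⟩ := hC
  unfold NonPeriodic at h0 h1
  push_neg at h0 h1
  obtain ⟨a, ha1, ha2, hA⟩ := h0
  obtain ⟨b, hb1, hb2, hB⟩ := h1
  have hap : a ≤ p - 1 := by omega
  have hbp : b ≤ p - 1 := by omega
  have e1 := hA (2*p-1-a) (by omega)
  have e2 := hB (2*p-1-b) (by omega)
  have e3 := hA (2*p-1-a-b) (by omega)
  have e4 := hB (2*p-1-a-b) (by omega)
  simp only [] at e1 e2 e3 e4
  have c1 : 2*p-1-a < 2*p-1 := by omega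
  have c2 : 2*p-1-b < 2*p-1 := by omega
  have c3 : 2*p-1-a-b < 2*p-1 := by omega
  have c4 : 2*p-1-a-b+a < 2*p-1 := by omega
  have c5 : 2*p-1-a-b+b < 2*p-1 := by omega
  have n1 : ¬ (2*p-1-a+a < 2*p-1) := by omega
  have n2 : ¬ (2*p-1-b+b < 2*p-1) := by omega
  rw [dif_pos c1, dif_neg n1] at e1
  rw [dif_pos c2, dif_neg n2] at e2
  rw [dif_pos c3, dif_pos c4] at e3
  rw [dif_pos c3, dif_pos c5] at e4
  have f1 : w ⟨2*p-1-a-b+a, c4⟩ = w ⟨2*p-1-b, c2⟩ := by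
    congr 1
    simp only [Fin.mk.injEq]
    omega
  have f2 : w ⟨2*p-1-a-b+b, c5⟩ = w ⟨2*p-1-a, c1⟩ := by
    congr 1
    simp only [Fin.mk.injEq]
    omega
  rw [f1, e2] at e3
  rw [f2, e1] at e4
  rw [e3] at e4
  simp at e4
end

section
/- For every deletion probability q ∈ [0,1) and every nonnegative integer m there exists an integer N such that for all n ≥ N the following holds: for every integer ℓ ≥ 1, all x, y ∈ {0,1}^n and all w ∈ {0,1}^ℓ, if Σ_{i=1}^n 1_w(x)_i · i^m ≠ Σ_{i=1}^n 1_w(y)_i · i^m, then there exists a complex number z such that |(z−q)/(1−q)|^n ≤ 2 and |Σ_{i=1}^n 1_w(x)_i z^i − Σ_{i=1}^n 1_w(y)_i z^i| ≥ 1/(n^{2m}(2m+2)). -/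
-- The entry `1_w(x)_i ∈ {0,1}` of the indicator vector, as a natural number.
open Classical in
noncomputable def ind {n ℓ : ℕ} (x : Fin n → Bool) (w : Fin ℓ → Bool) (i : Fin n) : ℕ :=
  if matchesAt x w i then 1 else 0

section aux
open Complex Metric Nat


lemma cauchy_est (f : ℂ → ℂ) (hf : Differentiable ℂ f) {r : ℝ} (hr : 0 < r) (m : ℕ) :
    ∃ t : ℂ, ‖t‖ = r ∧
      ‖iteratedDeriv m f 0‖ * r ^ m ≤ (m ! : ℝ) * ‖f t‖ := by
  lift r to NNReal using hr.le with R
  have hR : 0 < R := by exact_mod_cast hr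
  have hp : HasFPowerSeriesOnBall f (cauchyPowerSeries f 0 R) 0 ⊤ :=
    hf.hasFPowerSeriesOnBall 0 hR
  -- max point on the sphere
  obtain ⟨t, hts, htmax⟩ := (isCompact_sphere (0:ℂ) R).exists_isMaxOn
    (NormedSpace.sphere_nonempty.2 hR.le)
    ((continuous_norm.comp hf.continuous).continuousOn)
  refine ⟨t, by simpa using hts, ?_⟩
  have hfd : iteratedDeriv m f 0 = m ! • (cauchyPowerSeries f 0 R m) (fun _ => (1:ℂ)) := by
    rw [iteratedDeriv_eq_iteratedFDeriv, ← hp.factorial_smul 1 m]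
  have h1 : ‖(cauchyPowerSeries f 0 R m) (fun _ => (1:ℂ))‖
      ≤ ‖cauchyPowerSeries f 0 R m‖ := by
    simpa using (cauchyPowerSeries f 0 R m).le_opNorm (fun _ => (1:ℂ))
  have h2 : ‖cauchyPowerSeries f 0 R m‖ ≤
      ((2 * Real.pi)⁻¹ * ∫ θ : ℝ in (0)..2 * Real.pi, ‖f (circleMap 0 R θ)‖) * |(R:ℝ)|⁻¹ ^ m :=
    norm_cauchyPowerSeries_le f 0 R m
  have hint : (∫ θ : ℝ in (0)..2 * Real.pi, ‖f (circleMap 0 R θ)‖)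
      ≤ 2 * Real.pi * ‖f t‖ := by
    calc (∫ θ : ℝ in (0)..2 * Real.pi, ‖f (circleMap 0 R θ)‖)
        ≤ ∫ _ : ℝ in (0)..2 * Real.pi, ‖f t‖ := by
          apply intervalIntegral.integral_mono_on Real.two_pi_pos.le
          · exact ((hf.continuous.comp (continuous_circleMap 0 R)).norm).intervalIntegrable _ _
          · exact intervalIntegrable_const
          · intro θ _
            exact htmax (circleMap_mem_sphere 0 hR.le θ)
      _ = 2 * Real.pi * ‖f t‖ := by simp [mul_comm]
  have habs : ‖iteratedDeriv m f 0‖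
      = (m ! : ℝ) * ‖(cauchyPowerSeries f 0 R m) fun _ => (1:ℂ)‖ := by
    rw [hfd]
    simp [nsmul_eq_mul, map_mul]
  have hRabs : |(R:ℝ)| = R := abs_of_nonneg R.2
  have h3 : ‖(cauchyPowerSeries f 0 R m) fun _ => (1:ℂ)‖ * (R:ℝ)^m ≤ ‖f t‖ := by
    have h12 := h1.trans h2
    rw [hRabs, inv_pow] at h12
    have hpow : (0:ℝ) < (R:ℝ)^m := pow_pos hr m
    have hInn : (0:ℝ) ≤ (2 * Real.pi)⁻¹ := by positivity
    calc ‖(cauchyPowerSeries f 0 R m) fun _ => (1:ℂ)‖ * (R:ℝ)^m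
        ≤ (((2 * Real.pi)⁻¹ * ∫ θ : ℝ in (0)..2 * Real.pi, ‖f (circleMap 0 R θ)‖)
            * ((R:ℝ)^m)⁻¹) * (R:ℝ)^m := by gcongr
      _ = (2 * Real.pi)⁻¹ * ∫ θ : ℝ in (0)..2 * Real.pi, ‖f (circleMap 0 R θ)‖ := by
          field_simp
      _ ≤ (2 * Real.pi)⁻¹ * (2 * Real.pi * ‖f t‖) := by gcongr
      _ = ‖f t‖ := by field_simp
  rw [habs]
  calc (m ! : ℝ) * ‖(cauchyPowerSeries f 0 R m) fun _ => (1:ℂ)‖ * (R:ℝ) ^ m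
      = (m ! : ℝ) * (‖(cauchyPowerSeries f 0 R m) fun _ => (1:ℂ)‖ * (R:ℝ)^m) := by
        ring
    _ ≤ (m ! : ℝ) * ‖f t‖ := by
        exact mul_le_mul_of_nonneg_left h3 (by positivity)

lemma iterDeriv_expsum {n : ℕ} (c : Fin n → ℂ) (a : Fin n → ℂ) (m : ℕ) :
    iteratedDeriv m (fun t => ∑ i : Fin n, c i * Complex.exp (a i * t)) 0
      = ∑ i : Fin n, c i * a i ^ m := by
  have hterm : ∀ i : Fin n, ContDiff ℂ m (fun t : ℂ => Complex.exp (a i * t)) :=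
    fun i => (contDiff_const.mul contDiff_id).cexp
  set f : Fin n → ℂ → ℂ := fun i => c i • fun t : ℂ => Complex.exp (a i * t) with hf
  have heq : (fun t : ℂ => ∑ i : Fin n, c i * Complex.exp (a i * t))
      = (fun t : ℂ => ∑ i ∈ Finset.univ, f i t) := by
    ext t; simp [hf, smul_eq_mul]
  have hfc : ∀ i ∈ Finset.univ, ContDiff ℂ (m : ℕ∞) (f i) :=
    fun i _ => (hterm i).const_smul (c i)
  rw [iteratedDeriv_eq_iteratedFDeriv, heq, iteratedFDeriv_sum hfc]
  rw [Finset.sum_apply, ContinuousMultilinearMap.sum_apply]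
  refine Finset.sum_congr rfl fun i _ => ?_
  rw [hf]
  rw [iteratedFDeriv_const_smul_apply (hterm i).contDiffAt]
  rw [ContinuousMultilinearMap.smul_apply, ← iteratedDeriv_eq_iteratedFDeriv]
  have := congrFun (iteratedDeriv_cexp_const_mul m (a i)) 0
  rw [this]
  simp [smul_eq_mul]


end aux

theorem stmt12 (q : ℝ) (hq0 : 0 ≤ q) (hq1 : q < 1) (m : ℕ) :
    ∃ N : ℕ, ∀ n : ℕ, N ≤ n → ∀ ℓ : ℕ, 1 ≤ ℓ →
      ∀ x y : Fin n → Bool, ∀ w : Fin ℓ → Bool,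
        (∑ i : Fin n, ind x w i * (i.val + 1) ^ m) ≠
            (∑ i : Fin n, ind y w i * (i.val + 1) ^ m) →
          ∃ z : ℂ, ‖(z - q) / (1 - q)‖ ^ n ≤ 2 ∧
            1 / ((n : ℝ) ^ (2 * m) * (2 * m + 2)) ≤
              ‖(∑ i : Fin n, (ind x w i : ℂ) * z ^ (i.val + 1)) -
                (∑ i : Fin n, (ind y w i : ℂ) * z ^ (i.val + 1))‖ := by
  have hq' : (0:ℝ) < 1 - q := by linarith
  refine ⟨max 1 ⌈(m.factorial : ℝ) * (4 / (1 - q)) ^ m⌉₊, fun n hn ℓ hℓ x y w hne => ?_⟩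
  have hn1 : 1 ≤ n := le_trans (le_max_left _ _) hn
  have hn0 : (0:ℝ) < n := by exact_mod_cast hn1
  set r : ℝ := (1 - q) / 4 / n with hrdef
  have hr : 0 < r := by positivity
  have hr1 : r ≤ 1 := by
    rw [hrdef, div_div]
    rw [div_le_one (by positivity)]
    have : (1:ℝ) ≤ n := by exact_mod_cast hn1
    nlinarith
  set c : Fin n → ℂ := fun i => (ind x w i : ℂ) - (ind y w i : ℂ) with hc
  set a : Fin n → ℂ := fun i => ((i.val + 1 : ℕ) : ℂ) with ha
  set G : ℂ → ℂ := fun t => ∑ i : Fin n, c i * Complex.exp (a i * t) with hG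
  have hGdiff : Differentiable ℂ G := by
    apply Differentiable.fun_sum
    intro i _
    exact ((differentiable_id.const_mul (a i)).cexp).const_mul (c i)
  have hAval : iteratedDeriv m G 0 = ∑ i : Fin n, c i * a i ^ m := iterDeriv_expsum c a m
  -- the m-th derivative is a nonzero integer
  have hA1 : 1 ≤ ‖iteratedDeriv m G 0‖ := by
    rw [hAval]
    have : (∑ i : Fin n, c i * a i ^ m)
        = (((∑ i : Fin n, ind x w i * (i.val + 1) ^ m : ℕ) : ℤ)
          - ((∑ i : Fin n, ind y w i * (i.val + 1) ^ m : ℕ) : ℤ) : ℤ) := by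
      push_cast [hc, ha]
      rw [← Finset.sum_sub_distrib]
      exact Finset.sum_congr rfl fun i _ => by ring
    rw [this, Complex.norm_intCast]
    have hne' : ((∑ i : Fin n, ind x w i * (i.val + 1) ^ m : ℕ) : ℤ)
        - ((∑ i : Fin n, ind y w i * (i.val + 1) ^ m : ℕ) : ℤ) ≠ 0 := by
      intro h
      apply hne
      have := sub_eq_zero.mp h
      exact_mod_cast this
    exact_mod_cast Int.one_le_abs hne'
  obtain ⟨t, htabs, hest⟩ := cauchy_est G hGdiff hr m
  have hGt : (r:ℝ) ^ m / m.factorial ≤ ‖G t‖ := by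
    rw [div_le_iff₀ (by positivity)]
    calc r ^ m = 1 * r ^ m := (one_mul _).symm
      _ ≤ ‖iteratedDeriv m G 0‖ * r ^ m := by gcongr
      _ ≤ (m.factorial : ℝ) * ‖G t‖ := hest
      _ = ‖G t‖ * m.factorial := by ring
  set z : ℂ := Complex.exp t with hz
  refine ⟨z, ?_, ?_⟩
  · -- |(z-q)/(1-q)|^n ≤ 2
    have h1 : ‖z - q‖ ≤ (1 - q) + 2 * r := by
      have : z - (q:ℂ) = (z - 1) + ((1 - q : ℝ) : ℂ) := by push_cast; ring
      rw [this]
      refine (norm_add_le _ _).trans ?_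
      have h2 : ‖z - 1‖ ≤ 2 * r := by
        have := Complex.norm_exp_sub_one_le (x := t) (by rw [htabs]; exact hr1)
        rwa [htabs] at this
      rw [Complex.norm_real, Real.norm_eq_abs, abs_of_pos hq']
      linarith
    have habsle : ‖(z - q) / (1 - q)‖ ≤ 1 + 1 / (2 * n) := by
      have hden : ‖(1:ℂ) - q‖ = 1 - q := by
        rw [show (1:ℂ) - (q:ℝ) = ((1 - q : ℝ) : ℂ) by push_cast; ring,
          Complex.norm_real, Real.norm_eq_abs, abs_of_pos hq']
      rw [norm_div, hden, div_le_iff₀ hq']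
      have : (1 + 1 / (2 * (n:ℝ))) * (1 - q) = (1 - q) + 2 * r := by
        rw [hrdef]; field_simp; ring
      rw [this]; exact h1
    calc ‖(z - q) / (1 - q)‖ ^ n
        ≤ (1 + 1 / (2 * (n:ℝ))) ^ n :=
          pow_le_pow_left₀ (norm_nonneg _) habsle n
      _ ≤ Real.exp (1 / (2 * (n:ℝ))) ^ n :=
          pow_le_pow_left₀ (by positivity)
            (by linarith [Real.add_one_le_exp (1 / (2 * (n:ℝ)))]) n
      _ = Real.exp ((n:ℝ) * (1 / (2 * (n:ℝ)))) := by rw [Real.exp_nat_mul]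
      _ = Real.exp (1/2) := by
          congr 1
          field_simp
      _ ≤ 2 := by
          have h := Real.exp_one_lt_d9
          have h2 : Real.exp (1/2) ^ 2 = Real.exp 1 := by
            rw [← Real.exp_nat_mul]; norm_num
          nlinarith [Real.exp_pos (1/2)]
  · -- main lower bound
    have hsum : (∑ i : Fin n, (ind x w i : ℂ) * z ^ (i.val + 1)) -
        (∑ i : Fin n, (ind y w i : ℂ) * z ^ (i.val + 1)) = G t := by
      rw [hG, ← Finset.sum_sub_distrib]
      refine Finset.sum_congr rfl fun i _ => ?_
      rw [hc, ha, Complex.exp_nat_mul, ← hz]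
      ring
    rw [hsum]
    refine le_trans ?_ hGt
    -- 1/(n^(2m)(2m+2)) ≤ r^m/m!
    rw [div_le_div_iff₀ (by positivity) (by positivity)]
    have key : (m.factorial : ℝ) * (4 / (1 - q)) ^ m ≤ (n:ℝ) ^ m * (2 * m + 2) := by
      rcases Nat.eq_zero_or_pos m with hm | hm
      · subst hm; norm_num
      · have hKn : (m.factorial : ℝ) * (4 / (1 - q)) ^ m ≤ n := by
          have h1 : (⌈(m.factorial : ℝ) * (4 / (1 - q)) ^ m⌉₊ : ℝ) ≤ n := by
            exact_mod_cast le_trans (le_max_right _ _) hn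
          exact le_trans (Nat.le_ceil _) h1
        have h2 : (n:ℝ) ^ 1 ≤ (n:ℝ) ^ m :=
          pow_le_pow_right₀ (by exact_mod_cast hn1) hm
        have h3 : (1:ℝ) ≤ 2 * m + 2 := by
          have : (0:ℝ) ≤ m := Nat.cast_nonneg m
          linarith
        calc (m.factorial : ℝ) * (4 / (1 - q)) ^ m ≤ (n:ℝ) := hKn
          _ = (n:ℝ) ^ 1 := (pow_one _).symm
          _ ≤ (n:ℝ) ^ m := h2
          _ = (n:ℝ) ^ m * 1 := (mul_one _).symm
          _ ≤ (n:ℝ) ^ m * (2 * m + 2) := by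
              exact mul_le_mul_of_nonneg_left h3 (by positivity)
    -- convert key into the goal
    have hpos : (0:ℝ) < (4 / (1 - q)) ^ m := by positivity
    rw [← mul_le_mul_iff_of_pos_right hpos]
    calc 1 * (m.factorial : ℝ) * (4 / (1 - q)) ^ m
        = (m.factorial : ℝ) * (4 / (1 - q)) ^ m := by ring
      _ ≤ (n:ℝ) ^ m * (2 * m + 2) := key
      _ = r ^ m * ((n:ℝ) ^ (2*m) * (2 * m + 2)) * (4 / (1 - q)) ^ m := by
          rw [hrdef]
          rw [div_pow, div_pow, div_pow, pow_mul]
          field_simp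
          ring
end

section
/- Let n and m be positive integers with m ≤ n, and let f be a complex polynomial of degree at most n all of whose coefficients have absolute value at most 1. Suppose f(z) = (z−1)^m · Q(z) for a complex polynomial Q(z) = c_{n₁} z^{n₁} + ⋯ + c_1 z + c_0. Then Σ_{i=0}^{n₁} |c_i| ≤ (n+1) · (en/m)^m, where e is Euler's number. -/
open Polynomial

-- auxiliary: m^m / m! ≤ exp m
lemma aux_pow_div_factorial_le_exp (m : ℕ) : (m : ℝ) ^ m / m.factorial ≤ Real.exp m := by
  have h := Real.sum_le_exp_of_nonneg (x := (m : ℝ)) (by positivity) (m + 1)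
  refine le_trans ?_ h
  have : (m : ℝ) ^ m / m.factorial = (fun i => (m : ℝ) ^ i / i.factorial) m := rfl
  rw [this]
  exact Finset.single_le_sum (f := fun i => (m : ℝ) ^ i / i.factorial)
    (fun i _ => by positivity) (Finset.self_mem_range_succ m)

-- auxiliary: choose bound
lemma aux_choose_le (n m : ℕ) (hm : 0 < m) :
    ((n.choose m : ℝ)) ≤ (Real.exp 1 * n / m) ^ m := by
  have hm' : (0:ℝ) < m := by exact_mod_cast hm
  have h1 : (n.choose m : ℝ) ≤ (n : ℝ) ^ m / m.factorial := Nat.choose_le_pow_div m n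
  have h2 : (Real.exp 1 * n / m) ^ m = Real.exp m * ((n:ℝ) ^ m / (m:ℝ) ^ m) := by
    rw [div_pow, mul_pow]
    rw [show Real.exp 1 ^ m = Real.exp m by
      rw [← Real.exp_nat_mul]; norm_num]
    ring
  rw [h2]
  have h3 : (n : ℝ) ^ m / m.factorial ≤ Real.exp m * ((n:ℝ) ^ m / (m:ℝ) ^ m) := by
    have h4 := aux_pow_div_factorial_le_exp m
    have hf : (0:ℝ) < m.factorial := by exact_mod_cast m.factorial_pos
    rw [div_le_iff₀ hf] at *
    calc (n:ℝ) ^ m = ((m:ℝ)^m / m.factorial) * ((n:ℝ)^m / (m:ℝ)^m) * m.factorial := by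
          field_simp
      _ ≤ Real.exp m * ((n:ℝ)^m / (m:ℝ)^m) * m.factorial := by
          have : (0:ℝ) ≤ (n:ℝ)^m / (m:ℝ)^m := by positivity
          gcongr
          exact aux_pow_div_factorial_le_exp m
  linarith

theorem stmt15 (n m : ℕ) (hn : 0 < n) (hm : 0 < m) (hmn : m ≤ n)
    (f Q : ℂ[X]) (hdeg : f.degree ≤ n)
    (hcoeff : ∀ i : ℕ, ‖f.coeff i‖ ≤ 1)
    (hfact : f = (X - 1) ^ m * Q) :
    ∑ i ∈ Finset.range (Q.natDegree + 1), ‖Q.coeff i‖ ≤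
      (n + 1) * (Real.exp 1 * n / m) ^ m := by
  by_cases hQ : Q = 0
  · subst hQ
    simp only [Polynomial.coeff_zero, map_zero, norm_zero, Finset.sum_const_zero]
    positivity
  have hXm : ((X : ℂ[X]) - 1) ^ m ≠ 0 := by
    apply pow_ne_zero
    rw [show (1 : ℂ[X]) = C 1 by simp]
    exact X_sub_C_ne_zero 1
  have hf0 : f ≠ 0 := by rw [hfact]; exact mul_ne_zero hXm hQ
  have hfn : f.natDegree ≤ n := natDegree_le_iff_degree_le.mpr hdeg
  have hQdeg : Q.natDegree + m ≤ n := by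
    have h1 : f.natDegree = m + Q.natDegree := by
      rw [hfact, natDegree_mul hXm hQ]
      congr 1
      rw [show (1 : ℂ[X]) = C 1 by simp, natDegree_pow, natDegree_X_sub_C, mul_one]
    omega
  -- power series identity
  have hps : (Q : PowerSeries ℂ) =
      (f : PowerSeries ℂ) * ((-1) ^ m * (PowerSeries.invOneSubPow ℂ m).val) := by
    have hunit : ((1 : PowerSeries ℂ) - PowerSeries.X) ^ m *
        (PowerSeries.invOneSubPow ℂ m).val = 1 := by
      rw [← PowerSeries.invOneSubPow_inv_eq_one_sub_pow]
      exact (PowerSeries.invOneSubPow ℂ m).inv_val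
    have hcoe : (f : PowerSeries ℂ) =
        (PowerSeries.X - 1) ^ m * (Q : PowerSeries ℂ) := by
      rw [hfact, Polynomial.coe_mul, Polynomial.coe_pow, Polynomial.coe_sub,
        Polynomial.coe_X, Polynomial.coe_one]
    rw [hcoe]
    have hneg : ((PowerSeries.X : PowerSeries ℂ) - 1) ^ m * (-1) ^ m =
        ((1 : PowerSeries ℂ) - PowerSeries.X) ^ m := by
      rw [← mul_pow]; congr 1; ring
    calc (Q : PowerSeries ℂ) = (Q : PowerSeries ℂ) *
          (((1 : PowerSeries ℂ) - PowerSeries.X) ^ m *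
            (PowerSeries.invOneSubPow ℂ m).val) := by rw [hunit, mul_one]
      _ = (Q : PowerSeries ℂ) *
          ((((PowerSeries.X : PowerSeries ℂ) - 1) ^ m * (-1) ^ m) *
            (PowerSeries.invOneSubPow ℂ m).val) := by rw [hneg]
      _ = (PowerSeries.X - 1) ^ m * (Q : PowerSeries ℂ) *
          ((-1) ^ m * (PowerSeries.invOneSubPow ℂ m).val) := by ring
  -- coefficient bound
  have key : ∀ j : ℕ, ‖Q.coeff j‖ ≤ ((m + j).choose m : ℝ) := by
    intro j
    have hval := PowerSeries.invOneSubPow_val_eq_mk_sub_one_add_choose_of_pos ℂ m hm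
    have hco : Q.coeff j = ∑ p ∈ Finset.HasAntidiagonal.antidiagonal j,
        f.coeff p.1 * ((-1) ^ m * ((m - 1 + p.2).choose (m - 1) : ℂ)) := by
      have := congrArg (PowerSeries.coeff j) hps
      rw [Polynomial.coeff_coe, PowerSeries.coeff_mul] at this
      rw [this]
      refine Finset.sum_congr rfl fun p _ => ?_
      rw [Polynomial.coeff_coe]
      congr 1
      rw [hval]
      have hC : ((-1 : PowerSeries ℂ)) ^ m = PowerSeries.C ((-1) ^ m) := by
        simp [map_pow]
      rw [hC, PowerSeries.coeff_C_mul, PowerSeries.coeff_mk]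
    calc ‖Q.coeff j‖
        ≤ ∑ p ∈ Finset.HasAntidiagonal.antidiagonal j,
            ‖f.coeff p.1 * ((-1) ^ m * ((m - 1 + p.2).choose (m - 1) : ℂ))‖ := by
          rw [hco]; exact norm_sum_le _ _
      _ ≤ ∑ p ∈ Finset.HasAntidiagonal.antidiagonal j, (((m - 1 + p.2).choose (m - 1) : ℝ)) := by
          refine Finset.sum_le_sum fun p _ => ?_
          rw [norm_mul, norm_mul, norm_pow]
          simp only [norm_neg, norm_one, one_pow, one_mul, Complex.norm_natCast]
          exact mul_le_of_le_one_left (by positivity) (hcoeff p.1)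
      _ = ∑ p ∈ Finset.HasAntidiagonal.antidiagonal j, (((m - 1 + p.1).choose (m - 1) : ℝ)) := by
          simpa using (Finset.Nat.sum_antidiagonal_swap
            (f := fun p => (((m - 1 + p.1).choose (m - 1) : ℝ))) (n := j))
      _ = ∑ k ∈ Finset.range (j + 1), (((m - 1 + k).choose (m - 1) : ℝ)) :=
          Finset.Nat.sum_antidiagonal_eq_sum_range_succ_mk
            (fun p => (((m - 1 + p.1).choose (m - 1) : ℝ))) j
      _ = ((m + j).choose m : ℝ) := by
          have h2 : ∑ k ∈ Finset.range (j + 1), ((m - 1 + k).choose (m - 1))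
              = (m + j).choose m := by
            calc ∑ k ∈ Finset.range (j + 1), ((m - 1 + k).choose (m - 1))
                = ∑ k ∈ Finset.range (j + 1), ((k + (m - 1)).choose (m - 1)) := by
                  refine Finset.sum_congr rfl fun k _ => by rw [Nat.add_comm]
              _ = (j + (m - 1) + 1).choose ((m - 1) + 1) := Nat.sum_range_add_choose j (m - 1)
              _ = (m + j).choose m := by congr 1 <;> omega
          exact_mod_cast congrArg (Nat.cast : ℕ → ℝ) h2
  -- final chain
  have hnatbd : ((n + 1).choose (m + 1)) ≤ (n + 1) * n.choose m := by
    have h := Nat.add_one_mul_choose_eq n m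
    calc (n + 1).choose (m + 1) ≤ (n + 1).choose (m + 1) * (m + 1) :=
          Nat.le_mul_of_pos_right _ (by omega)
      _ = (n + 1) * n.choose m := h.symm
  calc ∑ i ∈ Finset.range (Q.natDegree + 1), ‖Q.coeff i‖
      ≤ ∑ i ∈ Finset.range (Q.natDegree + 1), ((m + i).choose m : ℝ) :=
        Finset.sum_le_sum fun i _ => key i
    _ ≤ ∑ i ∈ Finset.range (n - m + 1), ((m + i).choose m : ℝ) :=
        Finset.sum_le_sum_of_subset_of_nonneg
          (Finset.range_subset_range.2 (by omega)) (fun i _ _ => by positivity)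
    _ = ((n + 1).choose (m + 1) : ℝ) := by
        have h2 : ∑ i ∈ Finset.range (n - m + 1), ((m + i).choose m)
            = (n + 1).choose (m + 1) := by
          calc ∑ i ∈ Finset.range (n - m + 1), ((m + i).choose m)
              = ∑ i ∈ Finset.range (n - m + 1), ((i + m).choose m) := by
                refine Finset.sum_congr rfl fun i _ => by rw [Nat.add_comm]
            _ = (n - m + m + 1).choose (m + 1) := Nat.sum_range_add_choose (n - m) m
            _ = (n + 1).choose (m + 1) := by congr 2; omega
        exact_mod_cast congrArg (Nat.cast : ℕ → ℝ) h2
    _ ≤ ((n + 1) * n.choose m : ℕ) := by exact_mod_cast Nat.cast_le.2 hnatbd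
    _ = ((n : ℝ) + 1) * (n.choose m : ℝ) := by push_cast; ring
    _ ≤ ((n : ℝ) + 1) * (Real.exp 1 * n / m) ^ m := by
        gcongr
        exact aux_choose_le n m hm
end

section
/- For every nonnegative integer m there exists an integer N such that for all n ≥ N the following holds: let D = 2m+2 and z_j = exp(2πij/D) for j ∈ {1,…,D}; for every polynomial Q with integer coefficients such that Q(1) ≠ 0 and such that the polynomial (z−1)^m · Q(z) has degree at most n and all of its coefficients lie in {−1, 0, 1}, one has |Σ_{j=1}^D Q(1 + z_j/n²)| ≥ 1. -/
open Polynomial Finset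


open Polynomial Finset

lemma root_sum (D : ℕ) (hD : 0 < D) (k : ℕ) :
    ∑ j ∈ Finset.Icc 1 D, Complex.exp (2 * Real.pi * Complex.I * j / D) ^ k
      = if D ∣ k then (D : ℂ) else 0 := by
  have hDC : (D : ℂ) ≠ 0 := Nat.cast_ne_zero.mpr hD.ne'
  set w : ℂ := Complex.exp (2 * Real.pi * Complex.I * k / D) with hw
  have hterm : ∀ j : ℕ, Complex.exp (2 * Real.pi * Complex.I * j / D) ^ k = w ^ j := by
    intro j
    rw [hw, ← Complex.exp_nat_mul, ← Complex.exp_nat_mul]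
    congr 1
    ring
  rw [Finset.sum_congr rfl fun j _ => hterm j]
  have hwD : w ^ D = 1 := by
    rw [hw, ← Complex.exp_nat_mul]
    have : (D : ℂ) * (2 * Real.pi * Complex.I * k / D) = (k : ℤ) * (2 * Real.pi * Complex.I) := by
      push_cast; field_simp
    rw [this, Complex.exp_int_mul_two_pi_mul_I]
  rw [show Finset.Icc 1 D = Finset.Ico 1 (D+1) by rw [Finset.Ico_add_one_right_eq_Icc], Finset.sum_Ico_eq_sum_range]
  simp only [Nat.add_sub_cancel, add_comm 1]
  by_cases hdvd : D ∣ k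
  · obtain ⟨l, rfl⟩ := hdvd
    have hw1 : w = 1 := by
      rw [hw]
      have : 2 * Real.pi * Complex.I * (↑(D * l)) / D = (l : ℤ) * (2 * Real.pi * Complex.I) := by
        push_cast; field_simp
      rw [this, Complex.exp_int_mul_two_pi_mul_I]
    simp [hw1]
  · have hw1 : w ≠ 1 := by
      intro h
      apply hdvd
      rw [hw, Complex.exp_eq_one_iff] at h
      obtain ⟨l, hl⟩ := h
      have h2 : (2 * Real.pi * Complex.I : ℂ) ≠ 0 := by
        simp [Real.pi_ne_zero, Complex.I_ne_zero, Complex.ext_iff, Real.pi_pos.ne']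
      have hkc : (k : ℂ) = l * D := by
        field_simp at hl
        apply mul_left_cancel₀ h2
        linear_combination (2 * Real.pi * Complex.I) * hl
      have hki : (k : ℤ) = l * D := by exact_mod_cast hkc
      have : (D : ℤ) ∣ (k : ℤ) := ⟨l, by rw [hki, mul_comm]⟩
      exact Int.natCast_dvd_natCast.mp this
    simp only [if_neg hdvd]
    have : ∀ i ∈ Finset.range D, w ^ (i + 1) = w * w ^ i := by
      intro i _; rw [pow_add, pow_one]; ring
    rw [Finset.sum_congr rfl this, ← Finset.mul_sum, geom_sum_eq hw1, hwD]
    simp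

open Polynomial Finset

lemma coeff_bound (P : ℤ[X]) (n : ℕ) (hdeg : P.natDegree ≤ n)
    (hc : ∀ i, |P.coeff i| ≤ 1) (j : ℕ) :
    |(P.comp (X + 1)).coeff j| ≤ ((n : ℤ) + 1) ^ (j + 1) := by
  have hP : P.comp (X + 1) = ∑ i ∈ range (n + 1), C (P.coeff i) * (X + 1) ^ i := by
    conv_lhs => rw [P.as_sum_range' (n + 1) (Nat.lt_succ_of_le hdeg)]
    rw [Polynomial.sum_comp]
    exact Finset.sum_congr rfl fun i _ => by rw [monomial_comp]
  rw [hP, Polynomial.finset_sum_coeff]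
  simp only [Polynomial.coeff_C_mul, Polynomial.coeff_X_add_one_pow]
  calc |∑ i ∈ range (n + 1), P.coeff i * (i.choose j : ℤ)|
      ≤ ∑ i ∈ range (n + 1), |P.coeff i * (i.choose j : ℤ)| := Finset.abs_sum_le_sum_abs _ _
    _ ≤ ∑ i ∈ range (n + 1), ((n : ℤ) ^ j) := by
        apply Finset.sum_le_sum
        intro i hi
        rw [abs_mul]
        have h1 : |(i.choose j : ℤ)| ≤ (n : ℤ) ^ j := by
          rw [abs_of_nonneg (by positivity)]
          have : i.choose j ≤ n ^ j :=
            le_trans (Nat.choose_le_choose j (Nat.lt_succ_iff.mp (Finset.mem_range.mp hi))) (Nat.choose_le_pow n j)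
          exact_mod_cast this
        calc |P.coeff i| * |(i.choose j : ℤ)| ≤ 1 * ((n:ℤ)^j) := by
              apply mul_le_mul (hc i) h1 (abs_nonneg _) zero_le_one
          _ = (n:ℤ)^j := one_mul _
    _ = ((n : ℤ) + 1) * (n : ℤ) ^ j := by
        rw [Finset.sum_const, Finset.card_range]; push_cast; ring
    _ ≤ ((n : ℤ) + 1) ^ (j + 1) := by
        rw [pow_succ']
        apply mul_le_mul_of_nonneg_left _ (by positivity)
        exact pow_le_pow_left₀ (by positivity) (by omega) j

theorem stmt16 (m : ℕ) :
    ∃ N : ℕ, ∀ n : ℕ, N ≤ n →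
      ∀ Q : ℤ[X], Q.eval 1 ≠ 0 →
        ((X - 1) ^ m * Q).degree ≤ (n : WithBot ℕ) →
        (∀ i : ℕ, ((X - 1) ^ m * Q).coeff i ∈ ({-1, 0, 1} : Set ℤ)) →
        1 ≤ ‖(∑ j ∈ Finset.Icc 1 (2 * m + 2),
          aeval (1 + Complex.exp (2 * Real.pi * Complex.I * j / (2 * m + 2)) / (n : ℂ) ^ 2) Q : ℂ)‖ := by
  refine ⟨2 ^ (3 * m + 5), fun n hn Q hQ1 hdeg hcoeff => ?_⟩
  set D : ℕ := 2 * m + 2 with hD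
  have hDpos : 0 < D := by omega
  have hn4 : 4 ≤ n := le_trans (by calc 4 = 2^2 := rfl
    _ ≤ 2 ^ (3*m+5) := Nat.pow_le_pow_right (by norm_num) (by omega)) hn
  have hn0 : (0:ℝ) < n := by exact_mod_cast (by omega : 0 < n)
  have hnC : (n:ℂ) ≠ 0 := Nat.cast_ne_zero.mpr (by omega)
  set P : ℤ[X] := (X - 1) ^ m * Q with hP
  have hQ0 : Q ≠ 0 := fun h => hQ1 (by simp [h])
  have hXm : ((X - 1 : ℤ[X]) ^ m) ≠ 0 := pow_ne_zero m (by
    simpa using X_sub_C_ne_zero (1 : ℤ))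
  have hPne : P ≠ 0 := mul_ne_zero hXm hQ0
  have hPdeg : P.natDegree ≤ n := natDegree_le_iff_degree_le.mpr hdeg
  have hPc : ∀ i, |P.coeff i| ≤ 1 := by
    intro i
    rcases hcoeff i with h | h | h <;> simp_all
  set R : ℤ[X] := Q.comp (X + 1) with hR
  have hRdegQ : R.natDegree = Q.natDegree := by
    rw [hR, natDegree_comp, show ((X:ℤ[X]) + 1) = X + C 1 by simp, natDegree_X_add_C]
    ring
  have hQdegn : Q.natDegree ≤ n := by
    have := natDegree_mul hXm hQ0
    rw [← hP] at this
    omega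
  have hRdeg : R.natDegree ≤ n := by omega
  set d : ℕ := R.natDegree with hd
  -- key identity: P.comp (X+1) = X^m * R
  have hPcomp : P.comp (X + 1) = X ^ m * R := by
    rw [hP, mul_comp, pow_comp, sub_comp, X_comp, one_comp]
    congr 1
    rw [add_sub_cancel_right]
  have hRcoeff : ∀ k, R.coeff k = (P.comp (X + 1)).coeff (k + m) := by
    intro k
    rw [hPcomp, coeff_X_pow_mul]
  have hRbound : ∀ k, |R.coeff k| ≤ ((n : ℤ) + 1) ^ (k + m + 1) := by
    intro k
    rw [hRcoeff k]
    exact coeff_bound P n hPdeg hPc (k + m)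
  have hcast : (2 * (m:ℂ) + 2) = ((D:ℕ):ℂ) := by rw [hD]; push_cast; ring
  have key : (∑ j ∈ Finset.Icc 1 D, aeval (1 + Complex.exp (2 * Real.pi * Complex.I * j / (2 * (m:ℂ) + 2)) / (n : ℂ) ^ 2) Q)
      = (D:ℂ) * ∑ k ∈ (range (d+1)).filter (fun k => D ∣ k), ((R.coeff k : ℂ)) / ((n:ℂ))^(2*k) := by
    calc (∑ j ∈ Finset.Icc 1 D, aeval (1 + Complex.exp (2 * Real.pi * Complex.I * j / (2 * (m:ℂ) + 2)) / (n : ℂ) ^ 2) Q)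
        = ∑ j ∈ Finset.Icc 1 D, ∑ k ∈ range (d+1),
            (R.coeff k : ℂ) * (Complex.exp (2 * Real.pi * Complex.I * j / ((D:ℕ):ℂ)))^k / ((n:ℂ))^(2*k) := by
          apply Finset.sum_congr rfl
          intro j _
          rw [hcast, show (1 : ℂ) + Complex.exp (2 * Real.pi * Complex.I * j / ((D:ℕ):ℂ)) / (n:ℂ)^2
              = aeval (Complex.exp (2 * Real.pi * Complex.I * j / ((D:ℕ):ℂ)) / (n:ℂ)^2) ((X:ℤ[X]) + 1) by
                rw [map_add, aeval_X, map_one]; ring]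
          rw [← aeval_comp, ← hR, aeval_eq_sum_range, ← hd]
          apply Finset.sum_congr rfl
          intro k _
          rw [zsmul_eq_mul, div_pow, ← pow_mul]; ring
      _ = ∑ k ∈ range (d+1), (if D ∣ k then (R.coeff k : ℂ) * D / ((n:ℂ))^(2*k) else 0) := by
          rw [Finset.sum_comm]
          apply Finset.sum_congr rfl
          intro k _
          have : ∀ j ∈ Finset.Icc 1 D, (R.coeff k : ℂ) * (Complex.exp (2 * Real.pi * Complex.I * j / ((D:ℕ):ℂ)))^k / ((n:ℂ))^(2*k)
              = (R.coeff k : ℂ) / ((n:ℂ))^(2*k) * (Complex.exp (2 * Real.pi * Complex.I * j / ((D:ℕ):ℂ)))^k := by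
            intro j _; ring
          rw [Finset.sum_congr rfl this, ← Finset.mul_sum, root_sum D hDpos k]
          split_ifs with h
          · ring
          · ring
      _ = ∑ k ∈ (range (d+1)).filter (fun k => D ∣ k), (R.coeff k : ℂ) * D / ((n:ℂ))^(2*k) := by
          rw [Finset.sum_filter]
      _ = (D:ℂ) * ∑ k ∈ (range (d+1)).filter (fun k => D ∣ k), ((R.coeff k : ℂ)) / ((n:ℂ))^(2*k) := by
          rw [Finset.mul_sum]
          apply Finset.sum_congr rfl
          intro k _
          ring
  rw [key, norm_mul, Complex.norm_natCast]
  set F : Finset ℕ := (range (d+1)).filter (fun k => D ∣ k) with hF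
  have h0F : (0:ℕ) ∈ F := Finset.mem_filter.mpr ⟨Finset.mem_range.mpr (by omega), dvd_zero D⟩
  rw [← Finset.add_sum_erase _ _ h0F]
  -- bound on the constant term
  have hc0 : R.coeff 0 = Q.eval 1 := by
    rw [coeff_zero_eq_eval_zero, hR, eval_comp]
    simp
  have habs0 : 1 ≤ ‖((R.coeff 0 : ℂ))‖ := by
    rw [Complex.norm_intCast]
    have : 1 ≤ |R.coeff 0| := Int.one_le_abs (by rw [hc0]; exact hQ1)
    exact_mod_cast this
  -- bound on the tail
  have hsub : F.erase 0 ⊆ Finset.Icc D n := by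
    intro k hk
    obtain ⟨hk0, hkF⟩ := Finset.mem_erase.mp hk
    obtain ⟨hkr, hkd⟩ := Finset.mem_filter.mp hkF
    have hk1 : D ≤ k := Nat.le_of_dvd (Nat.pos_of_ne_zero hk0) hkd
    have hk2 : k ≤ n := by
      have := Finset.mem_range.mp hkr
      omega
    exact Finset.mem_Icc.mpr ⟨hk1, hk2⟩
  have hE : ‖(∑ k ∈ F.erase 0, (R.coeff k:ℂ)/(n:ℂ)^(2*k))‖ ≤ 1/2 := by
    have hgeom : ∑ k ∈ Finset.Icc D n, (2/(n:ℝ))^(k-D) ≤ 2 := by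
      have hr0 : (0:ℝ) ≤ 2/(n:ℝ) := by positivity
      have hr : (2:ℝ)/n ≤ 1/2 := by
        rw [div_le_div_iff₀ hn0 (by norm_num)]
        have : (4:ℝ) ≤ n := by exact_mod_cast hn4
        linarith
      calc ∑ k ∈ Finset.Icc D n, (2/(n:ℝ))^(k-D)
          = ∑ t ∈ range (n+1-D), (2/(n:ℝ))^((D+t)-D) := by
            rw [show Finset.Icc D n = Finset.Ico D (n+1) by rw [Finset.Ico_add_one_right_eq_Icc],
              Finset.sum_Ico_eq_sum_range]
        _ = ∑ t ∈ range (n+1-D), (2/(n:ℝ))^t := by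
            apply Finset.sum_congr rfl; intro t _; congr 1; omega
        _ ≤ ∑ t ∈ range (n+1-D), ((1:ℝ)/2)^t := by
            apply Finset.sum_le_sum
            intro t _
            exact pow_le_pow_left₀ hr0 hr t
        _ ≤ 2 := by
            rw [geom_sum_eq (by norm_num)]
            rw [div_le_iff_of_neg (by norm_num)]
            have : (0:ℝ) ≤ (1/2)^(n+1-D) := by positivity
            linarith
    calc ‖(∑ k ∈ F.erase 0, (R.coeff k:ℂ)/(n:ℂ)^(2*k))‖
        ≤ ∑ k ∈ F.erase 0, ‖((R.coeff k:ℂ)/(n:ℂ)^(2*k))‖ := norm_sum_le _ _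
      _ ≤ ∑ k ∈ F.erase 0, ((n:ℝ)+1)^(k+m+1)/(n:ℝ)^(2*k) := by
          apply Finset.sum_le_sum
          intro k _
          rw [norm_div, norm_pow, Complex.norm_natCast, Complex.norm_intCast]
          have hnum : |(R.coeff k : ℝ)| ≤ ((n:ℝ)+1)^(k+m+1) := by
            have := hRbound k
            have h2 : (|R.coeff k| : ℝ) ≤ (((n:ℤ)+1)^(k+m+1) : ℤ) := by exact_mod_cast this
            push_cast at h2
            convert h2 using 2
          gcongr
      _ ≤ ∑ k ∈ Finset.Icc D n, ((n:ℝ)+1)^(k+m+1)/(n:ℝ)^(2*k) :=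
          Finset.sum_le_sum_of_subset_of_nonneg hsub (fun k _ _ => by positivity)
      _ ≤ ∑ k ∈ Finset.Icc D n, (2^(3*m+3)/(n:ℝ)^(m+1)) * (2/(n:ℝ))^(k-D) := by
          apply Finset.sum_le_sum
          intro k hk
          have hkD : D ≤ k := (Finset.mem_Icc.mp hk).1
          obtain ⟨t, rfl⟩ : ∃ t, k = D + t := ⟨k - D, by omega⟩
          have hn1 : (1:ℝ) ≤ n := by exact_mod_cast (by omega : 1 ≤ n)
          rw [show (D+t)-D = t from by omega]
          have ea : (D+t)+m+1 = (3*m+3)+t := by omega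
          have eb : 2*(D+t) = ((3*m+3)+t) + ((m+1)+t) := by omega
          calc ((n:ℝ)+1)^((D+t)+m+1)/(n:ℝ)^(2*(D+t))
              ≤ (2*(n:ℝ))^((D+t)+m+1)/(n:ℝ)^(2*(D+t)) := by gcongr; linarith
            _ = (2^(3*m+3)/(n:ℝ)^(m+1)) * (2/(n:ℝ))^t := by
                rw [ea, eb, div_pow]; field_simp; ring
      _ = (2^(3*m+3)/(n:ℝ)^(m+1)) * ∑ k ∈ Finset.Icc D n, (2/(n:ℝ))^(k-D) := by
          rw [Finset.mul_sum]
      _ ≤ (2^(3*m+3)/(n:ℝ)^(m+1)) * 2 := by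
          apply mul_le_mul_of_nonneg_left hgeom (by positivity)
      _ ≤ 1/2 := by
          have hnpow : (2:ℝ)^(3*m+5) ≤ (n:ℝ)^(m+1) := by
            calc (2:ℝ)^(3*m+5) ≤ (n:ℝ) := by exact_mod_cast hn
              _ ≤ (n:ℝ)^(m+1) := le_self_pow₀ (by exact_mod_cast (by omega : 1 ≤ n)) (by omega)
          have h2 : (0:ℝ) < (n:ℝ)^(m+1) := by positivity
          rw [div_mul_eq_mul_div, div_le_div_iff₀ h2 (by norm_num)]
          have h3 : ((2:ℝ)^(3*m+3)*2)*2 = 2^(3*m+5) := by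
            rw [show 3*m+5 = 3*m+3+1+1 from by omega]; ring
          nlinarith [hnpow]
  -- conclude
  have h00 : ((R.coeff 0:ℂ)/(n:ℂ)^(2*0)) = (R.coeff 0:ℂ) := by norm_num
  rw [h00]
  set E : ℂ := ∑ k ∈ F.erase 0, (R.coeff k:ℂ)/(n:ℂ)^(2*k) with hEdef
  have htri : ‖((R.coeff 0:ℂ))‖ ≤ ‖((R.coeff 0:ℂ) + E)‖ + ‖E‖ := by
    have := norm_add_le ((R.coeff 0:ℂ) + E) (-E)
    simp only [add_neg_cancel_right, norm_neg] at this
    convert this using 2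
  have hD2 : (2:ℝ) ≤ (D:ℕ) := by exact_mod_cast (by omega : 2 ≤ D)
  have habsnn : (0:ℝ) ≤ ‖((R.coeff 0:ℂ) + E)‖ := norm_nonneg _
  nlinarith [htri, habs0, hE, hD2, habsnn]
end
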